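/- arXiv:2311.06471 — 7 statements merged into one kernel-verified Lean document; each statement's English description precedes it below -/
import Mathlib

section
/- Let K ⊆ E be a field extension of finite degree s, let m be a positive integer, and let ι, ι' : M_m(E) → M_{ms}(K) be two unitary embeddings of K-algebras. Then there exists an invertible matrix Y ∈ GL_{ms}(K) such that ι'(x) = Y⁻¹ ι(x) Y for all x ∈ M_m(E). -/
set_option linter.unusedSectionVars false
set_option linter.unusedVariables false

section SkolemNoetherAux

open Matrix

variable {K E : Type} [Field K] [Field E] [Algebra K E] [FiniteDimensional K E] {m : ℕ}

/-- matrix supported on column `j` with that column equal to `u`. -/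
def Mcol (j : Fin m) (u : Fin m → E) : Matrix (Fin m) (Fin m) E :=
  Matrix.of fun i l => if l = j then u i else 0

lemma mul_Mcol (j : Fin m) (x : Matrix (Fin m) (Fin m) E) (u : Fin m → E) :
    x * Mcol j u = Mcol j (x *ᵥ u) := by
  ext i l
  simp only [Mcol, Matrix.mul_apply, Matrix.of_apply, mulVec, dotProduct]
  by_cases h : l = j <;> simp [h]

lemma Mcol_smul (j : Fin m) (c : K) (u : Fin m → E) :
    Mcol j (c • u) = c • Mcol j u := by
  ext i l
  simp only [Mcol, Matrix.of_apply, Matrix.smul_apply, Pi.smul_apply]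
  by_cases h : l = j <;> simp [h]

lemma Mcol_add (j : Fin m) (u v : Fin m → E) :
    Mcol j (u + v) = Mcol j u + Mcol j v := by
  ext i l
  simp only [Mcol, Matrix.of_apply, Matrix.add_apply, Pi.add_apply]
  by_cases h : l = j <;> simp [h]

lemma sum_Mcol_single : ∑ j : Fin m, Mcol j (Pi.single j (1:E)) = 1 := by
  ext i l
  simp only [Finset.sum_apply, Matrix.sum_apply, Mcol, Matrix.of_apply, Matrix.one_apply]
  rw [Finset.sum_eq_single l]
  · by_cases h : i = l <;> simp [Pi.single_apply, h]
  · intro b _ hb; simp [Ne.symm hb]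
  · simp



lemma key_equiv {s : ℕ} (hs : Module.finrank K E = s) (hm : 0 < m)
    (ι : Matrix (Fin m) (Fin m) E →ₐ[K] Matrix (Fin (m * s)) (Fin (m * s)) K) :
    ∃ g : (Fin m → E) ≃ₗ[K] (Fin (m * s) → K),
      ∀ (x : Matrix (Fin m) (Fin m) E) (u : Fin m → E), g (x *ᵥ u) = ι x *ᵥ g u := by
  have hs0 : 0 < s := hs ▸ Module.finrank_pos
  have hN : 0 < m * s := Nat.mul_pos hm hs0
  haveI : NeZero (m * s) := ⟨hN.ne'⟩
  set v : Fin (m * s) → K := fun _ => 1 with hv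
  have hvne : v ≠ 0 := by
    intro h
    have := congrFun h ⟨0, hN⟩
    simp [hv] at this
  set ψ : Fin m → (Fin m → E) →ₗ[K] (Fin (m * s) → K) := fun j =>
    { toFun := fun u => ι (Mcol j u) *ᵥ v
      map_add' := fun u w => by
        show ι (Mcol j (u + w)) *ᵥ v = ι (Mcol j u) *ᵥ v + ι (Mcol j w) *ᵥ v
        rw [Mcol_add, map_add, Matrix.add_mulVec]
      map_smul' := fun c u => by
        show ι (Mcol j (c • u)) *ᵥ v = (RingHom.id K) c • (ι (Mcol j u) *ᵥ v)
        rw [Mcol_smul, _root_.map_smul, RingHom.id_apply, Matrix.smul_mulVec] } with hψ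
  have ψ_apply : ∀ j u, ψ j u = ι (Mcol j u) *ᵥ v := fun _ _ => rfl
  have ψ_inter : ∀ j (x : Matrix (Fin m) (Fin m) E) u, ψ j (x *ᵥ u) = ι x *ᵥ ψ j u := by
    intro j x u
    rw [ψ_apply, ψ_apply, ← mul_Mcol, _root_.map_mul, ← Matrix.mulVec_mulVec]
  have hmulvec_sum : ∀ (M : Fin m → Matrix (Fin (m * s)) (Fin (m * s)) K),
      (∑ j, M j) *ᵥ v = ∑ j, (M j) *ᵥ v := by
    intro M
    funext i
    simp only [mulVec, dotProduct, Matrix.sum_apply, Finset.sum_apply, Finset.sum_mul]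
    exact Finset.sum_comm
  have hsum : ∑ j : Fin m, ψ j (Pi.single j (1:E)) = v := by
    have h1 : ∑ j : Fin m, ψ j (Pi.single j (1:E))
        = ι (∑ j : Fin m, Mcol j (Pi.single j 1)) *ᵥ v := by
      rw [map_sum, hmulvec_sum]
      rfl
    rw [h1, sum_Mcol_single, _root_.map_one, Matrix.one_mulVec]
  have hjex : ∃ j : Fin m, ψ j ≠ 0 := by
    by_contra h
    push_neg at h
    apply hvne
    rw [← hsum]
    simp [h]
  obtain ⟨j, hj⟩ := hjex
  have hinj : Function.Injective (ψ j) := by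
    rw [← LinearMap.ker_eq_bot, eq_bot_iff]
    intro u hu
    simp only [LinearMap.mem_ker] at hu
    rw [Submodule.mem_bot]
    by_contra hune
    apply hj
    obtain ⟨i0, hi0⟩ : ∃ i0, u i0 ≠ 0 := by
      by_contra h; push_neg at h; exact hune (funext h)
    apply LinearMap.ext
    intro w
    have hw : w = (Matrix.of fun i k => if k = i0 then w i * (u i0)⁻¹ else 0) *ᵥ u := by
      funext i
      show w i = ∑ k, (if k = i0 then w i * (u i0)⁻¹ else 0) * u k
      rw [Finset.sum_eq_single i0]
      · rw [if_pos rfl, mul_assoc, inv_mul_cancel₀ hi0, mul_one]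
      · intro b _ hb; rw [if_neg hb, zero_mul]
      · simp
    rw [hw, ψ_inter, hu]
    simp
  have hfr : Module.finrank K (Fin m → E) = Module.finrank K (Fin (m * s) → K) := by
    rw [Module.finrank_pi_fintype, Module.finrank_pi]
    simp [hs, Finset.card_univ]
  have hbij : Function.Bijective (ψ j) :=
    ⟨hinj, (LinearMap.injective_iff_surjective_of_finrank_eq_finrank hfr).mp hinj⟩
  exact ⟨LinearEquiv.ofBijective (ψ j) hbij, fun x u => ψ_inter j x u⟩

end SkolemNoetherAux

open Matrix in
/-- Let `K ⊆ E` be a field extension of finite degree `s`, `m` a positive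
integer, and `ι, ι' : M_m(E) → M_{ms}(K)` two unitary embeddings of `K`-algebras. Then there is
an invertible matrix `Y ∈ GL_{ms}(K)` with `ι'(x) = Y⁻¹ ι(x) Y` for all `x ∈ M_m(E)`. -/
theorem stmt_1 (K E : Type) [Field K] [Field E] [Algebra K E] [FiniteDimensional K E]
    (s : ℕ) (hs : Module.finrank K E = s) (m : ℕ) (hm : 0 < m)
    (ι ι' : Matrix (Fin m) (Fin m) E →ₐ[K] Matrix (Fin (m * s)) (Fin (m * s)) K)
    (hι : Function.Injective ⇑ι) (hι' : Function.Injective ⇑ι') :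
    ∃ Y : (Matrix (Fin (m * s)) (Fin (m * s)) K)ˣ,
      ∀ x : Matrix (Fin m) (Fin m) E,
        ι' x = (↑Y⁻¹ : Matrix (Fin (m * s)) (Fin (m * s)) K) * ι x * (↑Y : Matrix (Fin (m * s)) (Fin (m * s)) K) := by
  classical
  obtain ⟨g, hg⟩ := key_equiv hs hm ι
  obtain ⟨g', hg'⟩ := key_equiv hs hm ι'
  set h : (Fin (m * s) → K) ≃ₗ[K] (Fin (m * s) → K) := g.symm.trans g' with hh
  have hinter : ∀ (x : Matrix (Fin m) (Fin m) E) (w : Fin (m * s) → K),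
      h ((ι x) *ᵥ w) = (ι' x) *ᵥ h w := by
    intro x w
    have : (ι x) *ᵥ w = g (x *ᵥ g.symm w) := by rw [hg, g.apply_symm_apply]
    rw [this]
    show g' (g.symm (g (x *ᵥ g.symm w))) = ι' x *ᵥ g' (g.symm w)
    rw [g.symm_apply_apply, hg']
  set H : Matrix (Fin (m * s)) (Fin (m * s)) K := LinearMap.toMatrix' (h : _ →ₗ[K] _) with hH
  set H' : Matrix (Fin (m * s)) (Fin (m * s)) K :=
    LinearMap.toMatrix' (h.symm : _ →ₗ[K] _) with hH'
  have Hvec : ∀ w, H *ᵥ w = h w := by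
    intro w
    rw [← Matrix.toLin'_apply, hH, Matrix.toLin'_toMatrix']; rfl
  have H'vec : ∀ w, H' *ᵥ w = h.symm w := by
    intro w
    rw [← Matrix.toLin'_apply, hH', Matrix.toLin'_toMatrix']; rfl
  have matrix_eq_of_mulVec : ∀ (M N : Matrix (Fin (m * s)) (Fin (m * s)) K),
      (∀ w, M *ᵥ w = N *ᵥ w) → M = N := by
    intro M N hMN
    have : Matrix.toLin' M = Matrix.toLin' N :=
      LinearMap.ext fun w => by rw [Matrix.toLin'_apply, Matrix.toLin'_apply, hMN]
    exact Matrix.toLin'.injective this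
  have hHH' : H * H' = 1 := matrix_eq_of_mulVec _ _ fun w => by
    rw [← Matrix.mulVec_mulVec, H'vec, Hvec, h.apply_symm_apply, Matrix.one_mulVec]
  have hH'H : H' * H = 1 := matrix_eq_of_mulVec _ _ fun w => by
    rw [← Matrix.mulVec_mulVec, Hvec, H'vec, h.symm_apply_apply, Matrix.one_mulVec]
  refine ⟨⟨H', H, hH'H, hHH'⟩, fun x => ?_⟩
  have hcomm : H * ι x = ι' x * H := matrix_eq_of_mulVec _ _ fun w => by
    rw [← Matrix.mulVec_mulVec, ← Matrix.mulVec_mulVec, Hvec, Hvec, hinter]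
  show ι' x = H * ι x * H'
  rw [hcomm, mul_assoc, hHH', mul_one]
end

section
/- Let K ⊆ E be a field extension of finite degree s, let m be a positive integer, and let ι : M_m(E) → M_{ms}(K) be a unitary embedding of K-algebras. Then the centralizer of the image ι(M_m(E)) in the matrix algebra M_{ms}(K) equals ι(E·I_m), the image under ι of the set of scalar matrices {z·I_m : z ∈ E}; and conversely, the centralizer of ι(E·I_m) in M_{ms}(K) equals ι(M_m(E)). In other words, ι(E·I_m) and ι(M_m(E)) are mutual centralizers in M_{ms}(K). -/
/-!
Through `ι`, the scalars `E·I_m` make `K^{ms}` an `E`-vector space `V` of dimension `m`, and the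
centralizer of `ι(E·I_m)` is `End_E V`, of `K`-dimension `s·m²`. It contains `ι(M_m(E))`, which
has the same dimension, so the two agree. Hence the centralizer of `ι(M_m(E))` lies in
`ι(M_m(E))`, where it is the image of the center of `M_m(E)`, that is, of `E·I_m`.
-/

open Module

theorem Set.centralizer_range_inter_range {F M N : Type*} [Semigroup M] [Semigroup N]
    [FunLike F M N] [MulHomClass F M N] {f : F} (hf : Function.Injective f) :
    centralizer (range f) ∩ range f = f '' center M := by
  ext y
  constructor
  · rintro ⟨hy, x, rfl⟩
    refine ⟨x, Semigroup.mem_center_iff.2 fun a => hf ?_, rfl⟩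
    rw [map_mul, map_mul]
    exact hy _ ⟨a, rfl⟩
  · rintro ⟨x, hx, rfl⟩
    refine ⟨?_, x, rfl⟩
    rintro _ ⟨a, rfl⟩
    rw [← map_mul, ← map_mul, Semigroup.mem_center_iff.1 hx a]

theorem Subalgebra.map_centralizer {R A B : Type*} [CommSemiring R] [Semiring A] [Semiring B]
    [Algebra R A] [Algebra R B] (e : A ≃ₐ[R] B) (S : Set A) :
    (centralizer R S).map (e : A →ₐ[R] B) = centralizer R (e '' S) := by
  ext b
  simp only [mem_map, mem_centralizer_iff, AlgEquiv.coe_toAlgHom, Set.forall_mem_image]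
  constructor
  · rintro ⟨a, ha, rfl⟩ x hx
    rw [← map_mul, ← map_mul, ha x hx]
  · intro hb
    refine ⟨e.symm b, fun x hx => e.injective ?_, e.apply_symm_apply b⟩
    rw [map_mul, map_mul, e.apply_symm_apply, hb hx]

section
variable {K A V : Type*} [CommSemiring K] [Semiring A] [Algebra K A] [AddCommMonoid V]
  [Module K V] [Module A V] [IsScalarTower K A V]

theorem Algebra.centralizer_range_lsmul :
    Subalgebra.toSubmodule
        (Subalgebra.centralizer K (Set.range (lsmul K K V : A →ₐ[K] End K V)))
      = LinearMap.range (LinearMap.restrictScalarsₗ K A V V K) := by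
  ext φ
  simp only [Subalgebra.mem_toSubmodule, Subalgebra.mem_centralizer_iff, Set.forall_mem_range,
    LinearMap.mem_range]
  constructor
  · intro hφ
    exact ⟨{ φ with map_smul' := fun a v => (LinearMap.congr_fun (hφ a) v).symm }, rfl⟩
  · rintro ⟨ψ, rfl⟩ a
    ext v
    exact (ψ.map_smul a v).symm

end

theorem Algebra.finrank_centralizer_range_lsmul_mul_finrank {K E V : Type*} [Field K] [Field E]
    [Algebra K E] [AddCommGroup V] [Module K V] [Module E V] [IsScalarTower K E V]
    [FiniteDimensional K V] :
    finrank K (Subalgebra.centralizer K (Set.range (lsmul K K V : E →ₐ[K] End K V)))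
      * finrank K E = finrank K V ^ 2 := by
  have : FiniteDimensional E V := Module.Finite.of_restrictScalars_finite K E V
  rw [← Subalgebra.finrank_toSubmodule, centralizer_range_lsmul,
    LinearMap.finrank_range_of_inj (LinearMap.restrictScalars_injective K),
    ← finrank_mul_finrank K E (V →ₗ[E] V), finrank_linearMap, ← finrank_mul_finrank K E V]
  ring

theorem Matrix.finrank_centralizer_range_mul_finrank {K E n : Type*} [Field K] [Field E]
    [Algebra K E] [Fintype n] [DecidableEq n] (f : E →ₐ[K] Matrix n n K) :
    finrank K (Subalgebra.centralizer K (Set.range f)) * finrank K E = Fintype.card n ^ 2 := by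
  let e : Matrix n n K ≃ₐ[K] End K (n → K) := toLinAlgEquiv'
  let _ : Module E (n → K) := Module.compHom _ (e.toAlgHom.comp f).toRingHom
  have : IsScalarTower K E (n → K) := ⟨fun c z v => by
    change e (f (c • z)) v = c • e (f z) v
    rw [map_smul, map_smul]; rfl⟩
  have hrange :
      Set.range (Algebra.lsmul K K (n → K) : E →ₐ[K] End K (n → K)) = e '' Set.range f := by
    rw [← Set.range_comp]; rfl
  rw [(e.subalgebraMap (Subalgebra.centralizer K (Set.range f))).toLinearEquiv.finrank_eq,
    Subalgebra.map_centralizer, ← hrange,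
    Algebra.finrank_centralizer_range_lsmul_mul_finrank, finrank_fintype_fun_eq_card]

theorem AlgHom.range_eq_centralizer_image_algebraMap {K E A n : Type*} [Field K] [Field E]
    [Algebra K E] [FiniteDimensional K E] [Ring A] [Algebra K A] [Algebra E A]
    [IsScalarTower K E A] [Fintype n] [DecidableEq n] (ι : A →ₐ[K] Matrix n n K)
    (hι : Function.Injective ι) (hdim : finrank K A * finrank K E = Fintype.card n ^ 2) :
    ι.range = Subalgebra.centralizer K (ι '' Set.range (algebraMap E A)) := by
  have hle : ι.range ≤ Subalgebra.centralizer K (ι '' Set.range (algebraMap E A)) := by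
    rintro _ ⟨x, rfl⟩ _ ⟨_, ⟨z, rfl⟩, rfl⟩
    change ι _ * ι x = ι x * ι _
    rw [← map_mul, ← map_mul, Algebra.commutes]
  refine Subalgebra.eq_of_le_of_finrank_eq hle
    (Nat.eq_of_mul_eq_mul_right (finrank_pos (R := K) (M := E)) ?_)
  have hcomp : ι ∘ algebraMap E A = ι.comp (IsScalarTower.toAlgHom K E A) := rfl
  rw [← Set.range_comp, hcomp, Matrix.finrank_centralizer_range_mul_finrank, ← hdim,
    ← Subalgebra.finrank_toSubmodule,
    ← LinearMap.finrank_range_of_inj (f := ι.toLinearMap) hι]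
  rfl

theorem stmt_2_general (K E : Type) [Field K] [Field E] [Algebra K E] [FiniteDimensional K E]
    (s : ℕ) (hs : Module.finrank K E = s) (m : ℕ)
    (ι : Matrix (Fin m) (Fin m) E →ₐ[K] Matrix (Fin (m * s)) (Fin (m * s)) K)
    (hι : Function.Injective ⇑ι) :
    Set.centralizer (Set.range ⇑ι)
        = ⇑ι '' {x : Matrix (Fin m) (Fin m) E | ∃ z : E, x = z • (1 : Matrix (Fin m) (Fin m) E)} ∧
    Set.centralizer
        (⇑ι '' {x : Matrix (Fin m) (Fin m) E | ∃ z : E, x = z • (1 : Matrix (Fin m) (Fin m) E)})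
        = Set.range ⇑ι := by
  have hscalar : {x : Matrix (Fin m) (Fin m) E | ∃ z : E, x = z • 1}
      = Set.range (algebraMap E (Matrix (Fin m) (Fin m) E)) := by
    simp only [Algebra.algebraMap_eq_smul_one, Set.range, eq_comm]
  have hcenter : Set.center (Matrix (Fin m) (Fin m) E)
      = Set.range (algebraMap E (Matrix (Fin m) (Fin m) E)) :=
    (congrArg SetLike.coe (Algebra.IsCentral.center_eq_bot E _)).trans Algebra.coe_bot
  have hcentralizer : Set.centralizer (ι '' Set.range (algebraMap E _)) = Set.range ι := by
    refine congrArg SetLike.coe (ι.range_eq_centralizer_image_algebraMap hι ?_).symm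
    rw [finrank_matrix, Fintype.card_fin, hs, Fintype.card_fin]
    ring
  refine ⟨?_, hscalar ▸ hcentralizer⟩
  rw [hscalar, ← hcenter, ← Set.centralizer_range_inter_range hι, Set.left_eq_inter]
  exact (Set.centralizer_subset (Set.image_subset_range _ _)).trans hcentralizer.le

/-- Let `K ⊆ E` be a field extension of finite degree `s`, `m` a positive
integer, and `ι : M_m(E) → M_{ms}(K)` a unitary embedding of `K`-algebras. Then the centralizer
of the image `ι(M_m(E))` in `M_{ms}(K)` equals `ι(E·I_m)` (the image of the scalar matrices),
and the centralizer of `ι(E·I_m)` equals `ι(M_m(E))`: they are mutual centralizers. -/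
theorem stmt_2 (K E : Type) [Field K] [Field E] [Algebra K E] [FiniteDimensional K E]
    (s : ℕ) (hs : Module.finrank K E = s) (m : ℕ) (hm : 0 < m)
    (ι : Matrix (Fin m) (Fin m) E →ₐ[K] Matrix (Fin (m * s)) (Fin (m * s)) K)
    (hι : Function.Injective ⇑ι) :
    Set.centralizer (Set.range ⇑ι)
        = ⇑ι '' {x : Matrix (Fin m) (Fin m) E | ∃ z : E, x = z • (1 : Matrix (Fin m) (Fin m) E)} ∧
    Set.centralizer
        (⇑ι '' {x : Matrix (Fin m) (Fin m) E | ∃ z : E, x = z • (1 : Matrix (Fin m) (Fin m) E)})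
        = Set.range ⇑ι :=
  stmt_2_general K E s hs m ι hι
end

section
/- Let G be a finite group with a normal subgroup N, let K ⊆ E be a field extension of finite degree s, and let A = M_m(E). Suppose G acts on A on the right by K-algebra automorphisms x ↦ x^g; suppose for each g ∈ G there is a field automorphism σ_g of E fixing K pointwise such that (z·x)^g = σ_g(z)·x^g for all z ∈ E and x ∈ A; and suppose X : N → GL_m(E) is a group homomorphism with x^n = X(n)⁻¹ x X(n) for all n ∈ N, x ∈ A, and X(n)^g = X(g⁻¹ n g) for all n ∈ N, g ∈ G. Let ι : A → M_{ms}(K) be a unitary embedding of K-algebras and let Y : G → GL_{ms}(K) be a function satisfying: Y(g)⁻¹ ι(x) Y(g) = ι(x^g) for all x ∈ A, g ∈ G; Y(n) = ι(X(n)) for all n ∈ N; and Y(gn) = Y(g)Y(n), Y(ng) = Y(n)Y(g) for all n ∈ N, g ∈ G. Then: (a) there is a unique function α : G × G → E^× such that Y(g)Y(h) = Y(gh)·ι(α(g,h)·I_m) for all g,h ∈ G; (b) α satisfies the 2-cocycle identity α(gh,k)·σ_k(α(g,h)) = α(g,hk)·α(h,k) for all g,h,k ∈ G; and (c) α(gn,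 hn') = α(g,h) for all g,h ∈ G and n, n' ∈ N, so that α is constant on N×N-cosets and descends to a factor set of G/N with values in E^×. -/
/-!
Through `ι`, the scalar matrices make `K^{ms}` an `E`-vector space of dimension `m`, and `ι`
identifies `M_m(E)` with its `E`-linear endomorphisms (an injection between spaces of the same
`E`-dimension `m²`). Hence the centralizer of `ι(M_m(E))` in `M_{ms}(K)` is `ι(E)`. As `Y(g)Y(h)`
and `Y(gh)` induce the same automorphism of `ι(M_m(E))`, the unit `Y(gh)⁻¹Y(g)Y(h)` lies in this
centralizer, which defines `α`. The cocycle identity is associativity of `Y(g)Y(h)Y(k)` combined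
with `ι(z)Y(k) = Y(k)ι(σ_k z)`; invariance under `N × N` holds because `Y(n) = ι(X(n))` commutes
with `ι(E)` and `Y(n)Y(h) = Y(nh) = Y(h · h⁻¹nh)`.
-/

open Module Function

section Centralizer

variable {K E V l : Type*} [Field K] [Field E] [Algebra K E] [Fintype l] [DecidableEq l]

theorem exists_algHom_eq_restrictScalars [AddCommGroup V] [Module K V] [Module E V]
    [IsScalarTower K E V] [FiniteDimensional E V]
    (ι : Matrix l l E →ₐ[K] Module.End K V) (hι : Injective ι)
    (hιE : ∀ (z : E) (v : V), ι (algebraMap E _ z) v = z • v)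
    (hV : finrank E V = Fintype.card l) (f : V →ₗ[E] V) :
    ∃ x, ι x = f.restrictScalars K := by
  let ψ : Matrix l l E →ₗ[E] V →ₗ[E] V :=
    { toFun := fun x =>
        { toFun := ι x
          map_add' := map_add (ι x)
          map_smul' := fun z v => by
            rw [RingHom.id_apply, ← hιE, ← hιE, ← Module.End.mul_apply, ← map_mul,
              ← Algebra.commutes, map_mul, Module.End.mul_apply] }
      map_add' := fun x y => by ext v; simp
      map_smul' := fun z x => by ext v; simp [Algebra.smul_def, hιE] }
  have hψ : Injective ψ := fun x y h => hι (LinearMap.ext fun v => LinearMap.congr_fun h v)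
  have hdim : finrank E (Matrix l l E) = finrank E (V →ₗ[E] V) := by
    rw [Module.finrank_linearMap, hV, Module.finrank_matrix, finrank_self, mul_one]
  obtain ⟨x, hx⟩ := (LinearMap.injective_iff_surjective_of_finrank_eq_finrank hdim).mp hψ f
  exact ⟨x, LinearMap.ext fun v => LinearMap.congr_fun hx v⟩

theorem Module.End.exists_algebraMap_eq_of_forall_commute [FiniteDimensional K E]
    [AddCommGroup V] [Module K V] [FiniteDimensional K V]
    (ι : Matrix l l E →ₐ[K] Module.End K V) (hι : Function.Injective ι)
    (hV : finrank K V = Fintype.card l * finrank K E)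
    (f : Module.End K V) (hf : ∀ x, Commute f (ι x)) :
    ∃ z : E, ι (algebraMap E _ z) = f := by
  let _ : Module E V := Module.compHom V (ι.toRingHom.comp (algebraMap E (Matrix l l E)))
  have : IsScalarTower K E V := ⟨fun k z v => by
    change ι (algebraMap E _ (k • z)) v = k • ι (algebraMap E _ z) v
    rw [Algebra.algebraMap_eq_smul_one, smul_assoc, map_smul, ← Algebra.algebraMap_eq_smul_one,
      LinearMap.smul_apply]⟩
  have : FiniteDimensional E V := Module.Finite.right K E V
  have hVE : finrank E V = Fintype.card l := by
    have h := Module.finrank_mul_finrank K E V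
    rw [hV, mul_comm] at h
    exact Nat.eq_of_mul_eq_mul_right finrank_pos h
  let f' : V →ₗ[E] V :=
    { f with map_smul' := fun z v => LinearMap.congr_fun (hf (algebraMap E _ z)) v }
  obtain ⟨x, hx⟩ := exists_algHom_eq_restrictScalars ι hι (fun _ _ => rfl) hVE f'
  replace hx : ι x = f := hx
  have hxc : ∀ y, Commute y x := fun y => hι (by rw [map_mul, map_mul, hx]; exact (hf y).symm.eq)
  obtain ⟨z, rfl⟩ := Matrix.mem_range_scalar_of_commute_single fun i j _ => hxc _
  exact ⟨z, hx⟩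

theorem Matrix.exists_algebraMap_eq_of_forall_commute [FiniteDimensional K E]
    {n : Type*} [Fintype n] [DecidableEq n]
    (ι : Matrix l l E →ₐ[K] Matrix n n K) (hι : Injective ι)
    (hn : Fintype.card n = Fintype.card l * finrank K E)
    (Z : Matrix n n K) (hZ : ∀ x, Commute Z (ι x)) :
    ∃ z : E, ι (algebraMap E _ z) = Z := by
  let T : Matrix n n K ≃ₐ[K] Module.End K (n → K) := Matrix.toLinAlgEquiv'
  obtain ⟨z, hz⟩ := Module.End.exists_algebraMap_eq_of_forall_commute
    (T.toAlgHom.comp ι) (T.injective.comp hι)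
    (by rw [Module.finrank_fintype_fun_eq_card, hn]) (T Z) fun x => (hZ x).map T
  exact ⟨z, T.injective hz⟩

theorem Matrix.exists_units_algebraMap_eq_of_forall_commute [FiniteDimensional K E]
    [Nonempty l] {n : Type*} [Fintype n] [DecidableEq n]
    (ι : Matrix l l E →ₐ[K] Matrix n n K) (hι : Injective ι)
    (hn : Fintype.card n = Fintype.card l * finrank K E)
    (u : (Matrix n n K)ˣ) (hu : ∀ x, Commute (u : Matrix n n K) (ι x)) :
    ∃ z : Eˣ, ι (algebraMap E _ z) = u := by
  obtain ⟨z, hz⟩ := exists_algebraMap_eq_of_forall_commute ι hι hn u hu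
  have : Nontrivial (Matrix n n K) := hι.nontrivial
  have hz0 : z ≠ 0 := by
    rintro rfl
    exact u.ne_zero (by rw [← hz, map_zero, map_zero])
  exact ⟨Units.mk0 z hz0, hz⟩

end Centralizer

section FactorSet

variable {G M R : Type*} [Group G] [Monoid M] [Monoid R]

def IsFactorSetOf (Y : G → Rˣ) (ρ : M →* R) (α : G → G → M) : Prop :=
  ∀ g h, (Y g : R) * Y h = Y (g * h) * ρ (α g h)

variable {Y : G → Rˣ} {ρ : M →* R} {α β : G → G → M}

theorem IsFactorSetOf.unique (hρ : Injective ρ) (hα : IsFactorSetOf Y ρ α)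
    (hβ : IsFactorSetOf Y ρ β) : α = β :=
  funext₂ fun g h => hρ <| (Units.mul_right_inj (Y (g * h))).mp <| (hα g h).symm.trans (hβ g h)

theorem IsFactorSetOf.cocycle (hρ : Injective ρ) (hα : IsFactorSetOf Y ρ α) {σ : G → M → M}
    (hσ : ∀ g z, SemiconjBy (Y g : R) (ρ (σ g z)) (ρ z)) (g h k : G) :
    α (g * h) k * σ k (α g h) = α g (h * k) * α h k := by
  have left : (Y g : R) * Y h * Y k = Y (g * h * k) * ρ (α (g * h) k * σ k (α g h)) := by
    rw [hα g h, mul_assoc, ← (hσ k _).eq, ← mul_assoc, hα (g * h) k, map_mul, mul_assoc]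
  have right : (Y g : R) * (Y h * Y k) = Y (g * h * k) * ρ (α g (h * k) * α h k) := by
    rw [hα h k, ← mul_assoc, hα g (h * k), map_mul, mul_assoc, mul_assoc g]
  exact hρ <| (Units.mul_right_inj _).mp <| left.symm.trans <| (mul_assoc _ _ _).trans right

theorem IsFactorSetOf.apply_mul_mul_of_mem (hρ : Injective ρ) (hα : IsFactorSetOf Y ρ α)
    {N : Subgroup G} (hN : N.Normal) (hYmul : ∀ g, ∀ n ∈ N, Y (g * n) = Y g * Y n)
    (hmulY : ∀ g, ∀ n ∈ N, Y (n * g) = Y n * Y g) (hYρ : ∀ n ∈ N, ∀ z, Commute (Y n : R) (ρ z))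
    {g h n n' : G} (hn : n ∈ N) (hn' : n' ∈ N) : α (g * n) (h * n') = α g h := by
  set k := h⁻¹ * n * h * n' with hk_def
  have hk : k ∈ N := N.mul_mem (hN.conj_mem' n hn h) hn'
  refine (hρ <| (Units.mul_right_inj (Y (g * n * (h * n')))).mp ?_).symm
  calc (Y (g * n * (h * n')) : R) * ρ (α g h) = Y (g * h * k) * ρ (α g h) := by
        rw [show g * n * (h * n') = g * h * k by rw [hk_def]; group]
    _ = Y (g * h) * ρ (α g h) * Y k := by
        rw [hYmul _ k hk, Units.val_mul, mul_assoc, mul_assoc, (hYρ k hk _).eq]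
    _ = Y g * Y (h * k) := by rw [← hα, hYmul h k hk, Units.val_mul, mul_assoc]
    _ = Y (g * n) * Y (h * n') := by
        rw [show h * k = n * (h * n') by rw [hk_def]; group, hmulY _ n hn, hYmul g n hn,
          Units.val_mul, Units.val_mul, mul_assoc]
    _ = Y (g * n * (h * n')) * ρ (α (g * n) (h * n')) := hα _ _

theorem commute_inv_mul_mul {A : Type*} (ι : A → R) {act : G → A → A}
    (hact1 : ∀ x, act 1 x = x) (hactmul : ∀ g h x, act h (act g x) = act (g * h) x)
    (hY : ∀ g x, SemiconjBy (Y g : R) (ι (act g x)) (ι x)) (g h : G) (x : A) :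
    Commute (↑((Y (g * h))⁻¹ * (Y g * Y h)) : R) (ι x) := by
  set y := act (g * h)⁻¹ x
  have hx : act (g * h) y = x := by rw [hactmul, inv_mul_cancel, hact1]
  have hgh : SemiconjBy (↑(Y g * Y h) : R) (ι x) (ι y) := by
    rw [Units.val_mul, ← hx, ← hactmul]
    exact (hY g y).mul_left (hY h (act g y))
  rw [Units.val_mul]
  exact (hx ▸ hY (g * h) y).units_inv_symm_left.mul_left hgh

theorem exists_isFactorSetOf {A : Type*} (ι : A → R) {act : G → A → A}
    (hact1 : ∀ x, act 1 x = x) (hactmul : ∀ g h x, act h (act g x) = act (g * h) x)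
    (hY : ∀ g x, SemiconjBy (Y g : R) (ι (act g x)) (ι x))
    (hcent : ∀ u : Rˣ, (∀ x, Commute (u : R) (ι x)) → ∃ z : Mˣ, ρ z = u) :
    ∃ α : G → G → Mˣ, IsFactorSetOf Y ρ fun g h => α g h := by
  choose α hα using fun g h => hcent _ (commute_inv_mul_mul ι hact1 hactmul hY g h)
  exact ⟨α, fun g h => by rw [hα, Units.val_mul, Units.mul_inv_cancel_left, Units.val_mul]⟩

end FactorSet

theorem stmt_4_general (G : Type) [Group G] (N : Subgroup G) (hN : N.Normal)
    (K E : Type) [Field K] [Field E] [Algebra K E] [FiniteDimensional K E]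
    (s : ℕ) (hs : Module.finrank K E = s) (m : ℕ) (hm : 0 < m)
    (act : G → (Matrix (Fin m) (Fin m) E ≃ₐ[K] Matrix (Fin m) (Fin m) E))
    (hact1 : ∀ x : Matrix (Fin m) (Fin m) E, act 1 x = x)
    (hactmul : ∀ (g h : G) (x : Matrix (Fin m) (Fin m) E), act h (act g x) = act (g * h) x)
    (σ : G → (E ≃ₐ[K] E))
    (hσ : ∀ (g : G) (z : E) (x : Matrix (Fin m) (Fin m) E),
      act g (z • x) = σ g z • act g x)
    (X : N →* (Matrix (Fin m) (Fin m) E)ˣ)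
    (ι : Matrix (Fin m) (Fin m) E →ₐ[K] Matrix (Fin (m * s)) (Fin (m * s)) K)
    (hι : Function.Injective ⇑ι)
    (Y : G → (Matrix (Fin (m * s)) (Fin (m * s)) K)ˣ)
    (hY1 : ∀ (x : Matrix (Fin m) (Fin m) E) (g : G),
      (↑((Y g)⁻¹) : Matrix (Fin (m * s)) (Fin (m * s)) K) * ι x
          * (↑(Y g) : Matrix (Fin (m * s)) (Fin (m * s)) K)
        = ι (act g x))
    (hY2 : ∀ n : N, (↑(Y ↑n) : Matrix (Fin (m * s)) (Fin (m * s)) K)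
        = ι (↑(X n) : Matrix (Fin m) (Fin m) E))
    (hY3 : ∀ (g : G) (n : N), Y (g * ↑n) = Y g * Y ↑n ∧ Y (↑n * g) = Y ↑n * Y g) :
    (∃! α : G → G → Eˣ, ∀ g h : G,
        (↑(Y g) : Matrix (Fin (m * s)) (Fin (m * s)) K)
            * (↑(Y h) : Matrix (Fin (m * s)) (Fin (m * s)) K)
          = (↑(Y (g * h)) : Matrix (Fin (m * s)) (Fin (m * s)) K)
            * ι ((↑(α g h) : E) • (1 : Matrix (Fin m) (Fin m) E))) ∧
    (∀ α : G → G → Eˣ,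
      (∀ g h : G,
        (↑(Y g) : Matrix (Fin (m * s)) (Fin (m * s)) K)
            * (↑(Y h) : Matrix (Fin (m * s)) (Fin (m * s)) K)
          = (↑(Y (g * h)) : Matrix (Fin (m * s)) (Fin (m * s)) K)
            * ι ((↑(α g h) : E) • (1 : Matrix (Fin m) (Fin m) E))) →
      (∀ g h k : G,
        (↑(α (g * h) k) : E) * σ k (↑(α g h) : E)
          = (↑(α g (h * k)) : E) * (↑(α h k) : E)) ∧
      (∀ (g h : G) (n n' : N), α (g * ↑n) (h * ↑n') = α g h)) := by
  have : Nonempty (Fin m) := ⟨⟨0, hm⟩⟩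
  let ρ : E →* Matrix (Fin (m * s)) (Fin (m * s)) K :=
    (ι.toRingHom.comp (algebraMap E (Matrix (Fin m) (Fin m) E))).toMonoidHom
  have hρ (z : E) : ρ z = ι (z • 1) := by rw [← Algebra.algebraMap_eq_smul_one]; rfl
  have hρinj : Function.Injective ρ := hι.comp (algebraMap E (Matrix (Fin m) (Fin m) E)).injective
  have hfactor (α : G → G → Eˣ) : (∀ g h, (Y g : Matrix _ _ K) * (Y h : Matrix _ _ K) =
      (Y (g * h) : Matrix _ _ K) * ι ((α g h : E) • 1)) ↔ IsFactorSetOf Y ρ fun g h => α g h := by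
    simp only [IsFactorSetOf, hρ]
  have hYι (g : G) (x) : SemiconjBy (Y g : Matrix _ _ K) (ι (act g x)) (ι x) := by
    rw [SemiconjBy, ← hY1, ← mul_assoc, ← mul_assoc, Units.mul_inv, one_mul]
  obtain ⟨α, hα⟩ := exists_isFactorSetOf (ρ := ρ) ι hact1 hactmul hYι fun u hu =>
    Matrix.exists_units_algebraMap_eq_of_forall_commute ι hι (by simp [hs]) u hu
  refine ⟨⟨α, (hfactor α).2 hα, fun β hβ => ?_⟩, fun β hβ => ?_⟩
  · funext g h
    exact Units.ext (congr_fun₂ (((hfactor β).1 hβ).unique hρinj hα) g h)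
  rw [hfactor] at hβ
  refine ⟨hβ.cocycle hρinj fun k z => ?_, fun g h n n' => Units.ext ?_⟩
  · simpa [hρ, hσ] using hYι k (z • 1)
  refine hβ.apply_mul_mul_of_mem hρinj hN (fun g n hn => (hY3 g ⟨n, hn⟩).1)
    (fun g n hn => (hY3 g ⟨n, hn⟩).2) (fun n hn z => ?_) n.2 n'.2
  rw [show (Y n : Matrix _ _ K) = ι (X ⟨n, hn⟩) from hY2 ⟨n, hn⟩]
  exact (Algebra.commute_algebraMap_right z _).map ι

/-- In the setting of Statement 3, with semilinearity data `σ_g` satisfying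
`(z•x)^g = σ_g(z)•x^g`, and `Y : G → GL_{ms}(K)` satisfying conditions (1)–(3): (a) there is a
unique `α : G × G → Eˣ` with `Y(g)Y(h) = Y(gh)·ι(α(g,h)•1)`; (b) `α` satisfies the 2-cocycle
identity `α(gh,k)·σ_k(α(g,h)) = α(g,hk)·α(h,k)`; (c) `α` is constant on `N×N`-cosets. -/
theorem stmt_4 (G : Type) [Group G] [Fintype G] (N : Subgroup G) (hN : N.Normal)
    (K E : Type) [Field K] [Field E] [Algebra K E] [FiniteDimensional K E]
    (s : ℕ) (hs : Module.finrank K E = s) (m : ℕ) (hm : 0 < m)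
    (act : G → (Matrix (Fin m) (Fin m) E ≃ₐ[K] Matrix (Fin m) (Fin m) E))
    (hact1 : ∀ x : Matrix (Fin m) (Fin m) E, act 1 x = x)
    (hactmul : ∀ (g h : G) (x : Matrix (Fin m) (Fin m) E), act h (act g x) = act (g * h) x)
    (σ : G → (E ≃ₐ[K] E))
    (hσ : ∀ (g : G) (z : E) (x : Matrix (Fin m) (Fin m) E),
      act g (z • x) = σ g z • act g x)
    (X : N →* (Matrix (Fin m) (Fin m) E)ˣ)
    (hXconj : ∀ (n : N) (x : Matrix (Fin m) (Fin m) E),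
      act ↑n x = (↑((X n)⁻¹) : Matrix (Fin m) (Fin m) E) * x * (↑(X n) : Matrix (Fin m) (Fin m) E))
    (hXact : ∀ (n : N) (g : G),
      act g (↑(X n) : Matrix (Fin m) (Fin m) E)
        = (↑(X ⟨g⁻¹ * ↑n * g, hN.conj_mem' ↑n n.2 g⟩) : Matrix (Fin m) (Fin m) E))
    (ι : Matrix (Fin m) (Fin m) E →ₐ[K] Matrix (Fin (m * s)) (Fin (m * s)) K)
    (hι : Function.Injective ⇑ι)
    (Y : G → (Matrix (Fin (m * s)) (Fin (m * s)) K)ˣ)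
    (hY1 : ∀ (x : Matrix (Fin m) (Fin m) E) (g : G),
      (↑((Y g)⁻¹) : Matrix (Fin (m * s)) (Fin (m * s)) K) * ι x
          * (↑(Y g) : Matrix (Fin (m * s)) (Fin (m * s)) K)
        = ι (act g x))
    (hY2 : ∀ n : N, (↑(Y ↑n) : Matrix (Fin (m * s)) (Fin (m * s)) K)
        = ι (↑(X n) : Matrix (Fin m) (Fin m) E))
    (hY3 : ∀ (g : G) (n : N), Y (g * ↑n) = Y g * Y ↑n ∧ Y (↑n * g) = Y ↑n * Y g) :
    (∃! α : G → G → Eˣ, ∀ g h : G,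
        (↑(Y g) : Matrix (Fin (m * s)) (Fin (m * s)) K)
            * (↑(Y h) : Matrix (Fin (m * s)) (Fin (m * s)) K)
          = (↑(Y (g * h)) : Matrix (Fin (m * s)) (Fin (m * s)) K)
            * ι ((↑(α g h) : E) • (1 : Matrix (Fin m) (Fin m) E))) ∧
    (∀ α : G → G → Eˣ,
      (∀ g h : G,
        (↑(Y g) : Matrix (Fin (m * s)) (Fin (m * s)) K)
            * (↑(Y h) : Matrix (Fin (m * s)) (Fin (m * s)) K)
          = (↑(Y (g * h)) : Matrix (Fin (m * s)) (Fin (m * s)) K)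
            * ι ((↑(α g h) : E) • (1 : Matrix (Fin m) (Fin m) E))) →
      (∀ g h k : G,
        (↑(α (g * h) k) : E) * σ k (↑(α g h) : E)
          = (↑(α g (h * k)) : E) * (↑(α h k) : E)) ∧
      (∀ (g h : G) (n n' : N), α (g * ↑n) (h * ↑n') = α g h)) :=
  stmt_4_general G N hN K E s hs m hm act hact1 hactmul σ hσ X ι hι Y hY1 hY2 hY3
end

section
/- Let K ⊆ E be fields, let G be a finite group with a normal subgroup N, and let X : N → GL_m(E) be a group homomorphism such that the centralizer of the image X(N) in M_m(E) is exactly the set of scalar matrices E·I_m. Suppose that for every g ∈ G we are given a field automorphism σ_g of E fixing K pointwise and a matrix T_g ∈ GL_m(E) such that σ_g(X(g n g⁻¹)) = T_g X(n) T_g⁻¹ for all n ∈ N, where σ_g is applied to matrices entrywise, and suppose that σ_{gh} = σ_h ∘ σ_g for all g, h ∈ G. Then the map M_m(E) × G → M_m(E), (x, g) ↦ x^g := T_g⁻¹ · σ_g(x) · T_g (with σ_g applied entrywise), does not depend on the choice of the matrices T_g with the stated intertwining property, and it defines a right action of G on M_m(E) by K-algebra automorphisms; in particular (x^g)^h = x^{gh}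 and x^1 = x for all x ∈ M_m(E) and g, h ∈ G. -/
lemma stmt5_key {E : Type} [Field E] {G : Type} [Group G] {N : Subgroup G}
    {m : ℕ} (X : N →* (Matrix (Fin m) (Fin m) E)ˣ)
    (hcent : Set.centralizer
        (Set.range fun n : N => (↑(X n) : Matrix (Fin m) (Fin m) E))
      = {x : Matrix (Fin m) (Fin m) E | ∃ z : E, x = z • (1 : Matrix (Fin m) (Fin m) E)})
    (S S' : (Matrix (Fin m) (Fin m) E)ˣ)
    (h : ∀ n : N, S * X n * S⁻¹ = S' * X n * S'⁻¹) :
    ∀ y : Matrix (Fin m) (Fin m) E,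
      (↑S⁻¹ : Matrix (Fin m) (Fin m) E) * y * (↑S : Matrix (Fin m) (Fin m) E)
        = (↑S'⁻¹ : Matrix (Fin m) (Fin m) E) * y * (↑S' : Matrix (Fin m) (Fin m) E) := by
  set u : (Matrix (Fin m) (Fin m) E)ˣ := S'⁻¹ * S with hu_def
  have hu : ∀ n : N, X n * u = u * X n := by
    intro n
    calc X n * u = S'⁻¹ * (S' * X n * S'⁻¹) * S := by rw [hu_def]; group
      _ = S'⁻¹ * (S * X n * S⁻¹) * S := by rw [h n]
      _ = u * X n := by rw [hu_def]; group
  have hmem : (↑u : Matrix (Fin m) (Fin m) E) ∈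
      Set.centralizer (Set.range fun n : N => (↑(X n) : Matrix (Fin m) (Fin m) E)) := by
    rintro a ⟨n, rfl⟩
    have := congrArg Units.val (hu n)
    simpa [Units.val_mul] using this
  rw [hcent] at hmem
  obtain ⟨z, hz⟩ := hmem
  set uM : Matrix (Fin m) (Fin m) E := (↑u : Matrix (Fin m) (Fin m) E) with huM
  set uM' : Matrix (Fin m) (Fin m) E := (↑u⁻¹ : Matrix (Fin m) (Fin m) E) with huM'
  have huu : uM' * uM = 1 := u.inv_mul
  have huu' : uM * uM' = 1 := u.mul_inv
  have hcomm : ∀ y : Matrix (Fin m) (Fin m) E, uM * y = y * uM := by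
    intro y
    rw [hz, smul_mul_assoc, one_mul, mul_smul_comm, mul_one]
  have hcomm' : ∀ y : Matrix (Fin m) (Fin m) E, uM' * y = y * uM' := by
    intro y
    have e1 : uM' * (y * uM) * uM' = uM' * y := by
      simp only [mul_assoc, huu', mul_one]
    have e2 : uM' * (y * uM) * uM' = y * uM' := by
      rw [← hcomm y]
      simp only [← mul_assoc, huu, one_mul]
    exact e1.symm.trans e2
  intro y
  have hS_eq : S = S' * u := by rw [hu_def]; group
  have hSv : (↑S : Matrix (Fin m) (Fin m) E) = (↑S' : Matrix (Fin m) (Fin m) E) * uM := by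
    rw [hS_eq]; exact Units.val_mul _ _
  have hSv' : (↑S⁻¹ : Matrix (Fin m) (Fin m) E) = uM' * (↑S'⁻¹ : Matrix (Fin m) (Fin m) E) := by
    rw [hS_eq, mul_inv_rev]; exact Units.val_mul _ _
  calc (↑S⁻¹ : Matrix (Fin m) (Fin m) E) * y * ↑S
      = uM' * ((↑S'⁻¹ : Matrix (Fin m) (Fin m) E) * y * ↑S') * uM := by
        rw [hSv, hSv']; noncomm_ring
    _ = ((↑S'⁻¹ : Matrix (Fin m) (Fin m) E) * y * ↑S') * uM' * uM := by
        rw [hcomm']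
    _ = (↑S'⁻¹ : Matrix (Fin m) (Fin m) E) * y * ↑S' := by rw [mul_assoc, huu, mul_one]



/-- The candidate right action `x^g := T_g⁻¹ · σ_g(x) · T_g` (with `σ_g` applied entrywise). -/
def stmt5Act {E : Type} [Field E] {K : Type} [Field K] [Algebra K E] {G : Type} [Group G]
    {m : ℕ} (σ : G → (E ≃ₐ[K] E)) (T : G → (Matrix (Fin m) (Fin m) E)ˣ)
    (g : G) (x : Matrix (Fin m) (Fin m) E) : Matrix (Fin m) (Fin m) E :=
  (↑(T g)⁻¹ : Matrix (Fin m) (Fin m) E) * x.map ⇑(σ g) * (↑(T g) : Matrix (Fin m) (Fin m) E)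

/-- Given `X : N → GL_m(E)` whose image has the scalar matrices as its
centralizer, automorphisms `σ_g` of `E` fixing `K` with `σ_{gh} = σ_h ∘ σ_g`, and matrices
`T_g` intertwining `σ_g(X(gng⁻¹))` with `X(n)`, the map `(x,g) ↦ T_g⁻¹ σ_g(x) T_g` is
independent of the choice of the `T_g` and defines a right action of `G` on `M_m(E)` by
`K`-algebra automorphisms; in particular `(x^g)^h = x^{gh}` and `x^1 = x`. -/
theorem stmt_5 (K E : Type) [Field K] [Field E] [Algebra K E]
    (G : Type) [Group G] [Fintype G] (N : Subgroup G) (hN : N.Normal)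
    (m : ℕ) (X : N →* (Matrix (Fin m) (Fin m) E)ˣ)
    (hcent : Set.centralizer
        (Set.range fun n : N => (↑(X n) : Matrix (Fin m) (Fin m) E))
      = {x : Matrix (Fin m) (Fin m) E | ∃ z : E, x = z • (1 : Matrix (Fin m) (Fin m) E)})
    (σ : G → (E ≃ₐ[K] E))
    (hσmul : ∀ g h : G, (σ g).trans (σ h) = σ (g * h))
    (T : G → (Matrix (Fin m) (Fin m) E)ˣ)
    (hT : ∀ (g : G) (n : N),
      ((↑(X ⟨g * ↑n * g⁻¹, hN.conj_mem ↑n n.2 g⟩) : Matrix (Fin m) (Fin m) E)).map ⇑(σ g)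
        = (↑(T g) : Matrix (Fin m) (Fin m) E) * (↑(X n) : Matrix (Fin m) (Fin m) E)
            * (↑(T g)⁻¹ : Matrix (Fin m) (Fin m) E)) :
    -- independence of the choice of the matrices `T_g`
    (∀ T' : G → (Matrix (Fin m) (Fin m) E)ˣ,
      (∀ (g : G) (n : N),
        ((↑(X ⟨g * ↑n * g⁻¹, hN.conj_mem ↑n n.2 g⟩) : Matrix (Fin m) (Fin m) E)).map ⇑(σ g)
          = (↑(T' g) : Matrix (Fin m) (Fin m) E) * (↑(X n) : Matrix (Fin m) (Fin m) E)
              * (↑(T' g)⁻¹ : Matrix (Fin m) (Fin m) E)) →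
      ∀ (g : G) (x : Matrix (Fin m) (Fin m) E), stmt5Act σ T g x = stmt5Act σ T' g x) ∧
    -- `x^1 = x`
    (∀ x : Matrix (Fin m) (Fin m) E, stmt5Act σ T 1 x = x) ∧
    -- `(x^g)^h = x^{gh}`
    (∀ (g h : G) (x : Matrix (Fin m) (Fin m) E),
      stmt5Act σ T h (stmt5Act σ T g x) = stmt5Act σ T (g * h) x) ∧
    -- each `x ↦ x^g` is a `K`-algebra automorphism
    (∀ g : G, Function.Bijective (stmt5Act σ T g)) ∧
    (∀ (g : G) (x y : Matrix (Fin m) (Fin m) E),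
      stmt5Act σ T g (x + y) = stmt5Act σ T g x + stmt5Act σ T g y) ∧
    (∀ (g : G) (x y : Matrix (Fin m) (Fin m) E),
      stmt5Act σ T g (x * y) = stmt5Act σ T g x * stmt5Act σ T g y) ∧
    (∀ (g : G) (c : K) (x : Matrix (Fin m) (Fin m) E),
      stmt5Act σ T g (c • x) = c • stmt5Act σ T g x) ∧
    (∀ g : G, stmt5Act σ T g 1 = 1) := by
  -- notation
  have hmapmul : ∀ (f : E ≃ₐ[K] E) (x y : Matrix (Fin m) (Fin m) E),
      (x * y).map ⇑f = x.map ⇑f * y.map ⇑f := by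
    intro f x y
    ext i j
    simp [Matrix.map_apply, Matrix.mul_apply, map_sum]
  have hmap1 : ∀ (f : E ≃ₐ[K] E), (1 : Matrix (Fin m) (Fin m) E).map ⇑f = 1 := by
    intro f
    ext i j
    simp [Matrix.map_apply, Matrix.one_apply, apply_ite]
  -- σ 1 is the identity
  have hσ1 : ∀ e : E, σ 1 e = e := by
    intro e
    have h1 : ((σ 1).trans (σ 1)) e = (σ 1) e := by rw [hσmul 1 1, one_mul]
    exact (σ 1).injective h1
  have hmapσ1 : ∀ x : Matrix (Fin m) (Fin m) E, x.map ⇑(σ 1) = x := by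
    intro x
    ext i j
    simp [Matrix.map_apply, hσ1]
  -- composition of maps
  have hmapcomp : ∀ (g h : G) (x : Matrix (Fin m) (Fin m) E),
      (x.map ⇑(σ g)).map ⇑(σ h) = x.map ⇑(σ (g * h)) := by
    intro g h x
    rw [Matrix.map_map, ← hσmul g h]
    rfl
  -- independence
  have hindep : ∀ T' : G → (Matrix (Fin m) (Fin m) E)ˣ,
      (∀ (g : G) (n : N),
        ((↑(X ⟨g * ↑n * g⁻¹, hN.conj_mem ↑n n.2 g⟩) : Matrix (Fin m) (Fin m) E)).map ⇑(σ g)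
          = (↑(T' g) : Matrix (Fin m) (Fin m) E) * (↑(X n) : Matrix (Fin m) (Fin m) E)
              * (↑(T' g)⁻¹ : Matrix (Fin m) (Fin m) E)) →
      ∀ (g : G) (x : Matrix (Fin m) (Fin m) E), stmt5Act σ T g x = stmt5Act σ T' g x := by
    intro T' hT' g x
    have h : ∀ n : N, T g * X n * (T g)⁻¹ = T' g * X n * (T' g)⁻¹ := by
      intro n
      apply Units.ext
      simp only [Units.val_mul]
      rw [← hT g n, hT' g n]
    exact stmt5_key X hcent (T g) (T' g) h (x.map ⇑(σ g))
  -- x ^ 1 = x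
  have hone : ∀ x : Matrix (Fin m) (Fin m) E, stmt5Act σ T 1 x = x := by
    intro x
    have h : ∀ n : N, T 1 * X n * (T 1)⁻¹ = 1 * X n * 1⁻¹ := by
      intro n
      apply Units.ext
      simp only [Units.val_mul, inv_one, Units.val_one, one_mul, mul_one]
      have hn : (⟨1 * ↑n * 1⁻¹, hN.conj_mem ↑n n.2 1⟩ : N) = n := by
        ext; simp
      rw [← hT 1 n, hn, hmapσ1]
    have := stmt5_key X hcent (T 1) 1 h (x.map ⇑(σ 1))
    unfold stmt5Act
    rw [this, hmapσ1]
    simp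
  -- cocycle
  have hcoc : ∀ (g h : G) (x : Matrix (Fin m) (Fin m) E),
      stmt5Act σ T h (stmt5Act σ T g x) = stmt5Act σ T (g * h) x := by
    intro g h x
    set mh : (Matrix (Fin m) (Fin m) E)ˣ →* (Matrix (Fin m) (Fin m) E)ˣ :=
      Units.map ((σ h).toRingHom.mapMatrix : Matrix (Fin m) (Fin m) E →+* Matrix (Fin m) (Fin m) E).toMonoidHom
      with hmh
    set S' : (Matrix (Fin m) (Fin m) E)ˣ := mh (T g) * T h with hS'
    have hval : (↑(mh (T g)) : Matrix (Fin m) (Fin m) E)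
        = (↑(T g) : Matrix (Fin m) (Fin m) E).map ⇑(σ h) := rfl
    have hvalinv : (↑(mh (T g))⁻¹ : Matrix (Fin m) (Fin m) E)
        = (↑(T g)⁻¹ : Matrix (Fin m) (Fin m) E).map ⇑(σ h) := by
      rw [← map_inv mh (T g)]; rfl
    have hkey : ∀ n : N, T (g * h) * X n * (T (g * h))⁻¹ = S' * X n * S'⁻¹ := by
      intro n
      apply Units.ext
      simp only [Units.val_mul, hS', mul_inv_rev, hval, hvalinv]
      have hsub : (⟨g * ↑(⟨h * ↑n * h⁻¹, hN.conj_mem ↑n n.2 h⟩ : N) * g⁻¹,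
            hN.conj_mem _ (hN.conj_mem ↑n n.2 h) g⟩ : N)
          = ⟨(g * h) * ↑n * (g * h)⁻¹, hN.conj_mem ↑n n.2 (g * h)⟩ := by
        ext; simp [mul_assoc]
      have step1 := congrArg (fun M : Matrix (Fin m) (Fin m) E => M.map ⇑(σ h))
        (hT g ⟨h * ↑n * h⁻¹, hN.conj_mem ↑n n.2 h⟩)
      simp only at step1
      rw [hsub, hmapcomp, hT (g * h) n] at step1
      rw [step1, hmapmul, hmapmul, hT h n]
      simp only [mul_assoc]
    have := stmt5_key X hcent (T (g * h)) S' hkey (x.map ⇑(σ (g * h)))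
    unfold stmt5Act
    rw [this]
    have hSv : (↑S' : Matrix (Fin m) (Fin m) E)
        = (↑(T g) : Matrix (Fin m) (Fin m) E).map ⇑(σ h)
            * (↑(T h) : Matrix (Fin m) (Fin m) E) := by
      rw [hS', Units.val_mul, hval]
    have hSv' : (↑S'⁻¹ : Matrix (Fin m) (Fin m) E)
        = (↑(T h)⁻¹ : Matrix (Fin m) (Fin m) E)
            * (↑(T g)⁻¹ : Matrix (Fin m) (Fin m) E).map ⇑(σ h) := by
      rw [hS', mul_inv_rev, Units.val_mul, hvalinv]
    rw [hSv, hSv', ← hmapcomp g h x, hmapmul, hmapmul]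
    simp only [mul_assoc]
  refine ⟨hindep, hone, hcoc, ?_, ?_, ?_, ?_, ?_⟩
  · -- bijectivity
    intro g
    refine Function.bijective_iff_has_inverse.mpr ⟨stmt5Act σ T g⁻¹, ?_, ?_⟩
    · intro x
      rw [hcoc g g⁻¹ x, mul_inv_cancel, hone]
    · intro x
      rw [hcoc g⁻¹ g x, inv_mul_cancel, hone]
  · -- additivity
    intro g x y
    unfold stmt5Act
    have : (x + y).map ⇑(σ g) = x.map ⇑(σ g) + y.map ⇑(σ g) := by
      ext i j; simp [Matrix.map_apply]
    rw [this, mul_add, add_mul]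
  · -- multiplicativity
    intro g x y
    unfold stmt5Act
    rw [hmapmul]
    have : x.map ⇑(σ g) * y.map ⇑(σ g)
        = x.map ⇑(σ g) * ((↑(T g) : Matrix (Fin m) (Fin m) E)
            * (↑(T g)⁻¹ : Matrix (Fin m) (Fin m) E)) * y.map ⇑(σ g) := by
      rw [Units.mul_inv, mul_one]
    rw [this]
    simp only [mul_assoc]
  · -- K-linearity
    intro g c x
    unfold stmt5Act
    have : (c • x).map ⇑(σ g) = c • x.map ⇑(σ g) := by
      ext i j
      simp [Matrix.map_apply, Matrix.smul_apply, map_smul]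
    rw [this, mul_smul_comm, smul_mul_assoc]
  · -- unit
    intro g
    unfold stmt5Act
    rw [hmap1, mul_one, Units.inv_mul]
end

section
/- Let F be a field of characteristic p, let G be a finite group, and let X : G → GL_s(F) be a function together with a function α : G × G → F^× such that X(g)X(h) = α(g,h)·X(gh) for all g,h ∈ G (so X is a projective representation of G; the case α ≡ 1 of an ordinary group representation is included). Assume that the F-linear span of {X(g) : g ∈ G} is all of M_s(F). Regard A = M_s(F) as a G-algebra via the (well-defined) conjugation action x^g = X(g)⁻¹ x X(g). Then there exists a p-subgroup V of G such that: (1) the identity matrix I_s lies in Tr_V^G(A^V); and (2) for every subgroup H ≤ G with I_s ∈ Tr_H^G(A^H), the subgroup V is contained in some G-conjugate of H. -/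
/-!
Conjugation by a projective representation is a genuine action of `G` on `A = M_s(F)`, because
the scalars `α(g,h)` are central; as the `X(g)` span `A`, the fixed points `A^G` are the central
elements, i.e. the scalars, so `A^G` is local. Green's theory then applies. By Mackey's formula,
`Tr_H(a) Tr_K(b)` is a sum of traces from the subgroups `K ∩ ᵍH`, all lying in `A^G`; if both
factors equal `1`, locality makes one summand a unit, so `A` is relatively `(K ∩ ᵍH)`-projective.
Hence a minimal `V` with `I_s ∈ Tr_V(A^V)` lies in a conjugate of every `H` with
`I_s ∈ Tr_H(A^H)`. A Sylow `p`-subgroup `P` is such an `H`, as `[G : P]` is invertible in `F`,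
so `V` is a `p`-group.
-/

/-- `s` is a complete set of representatives of the right cosets of `Q` in `S`. -/
def IsRightTransversal {D : Type*} [Group D] (Q S : Subgroup D) (s : Finset D) : Prop :=
  (↑s : Set D) ⊆ (S : Set D) ∧ ∀ d ∈ S, ∃! r : D, r ∈ s ∧ d * r⁻¹ ∈ Q

/-- The set of relative traces `Tr_Q^S(x) = Σ_i x^{g_i}` of `Q`-fixed elements `x`. -/
def relTraceSet {D A : Type*} [Group D] [AddCommMonoid A]
    (act : D → A → A) (Q S : Subgroup D) : Set A :=
  {y | ∃ x : A, (∀ q ∈ Q, act q x = x) ∧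
    ∃ s : Finset D, IsRightTransversal Q S s ∧ y = ∑ r ∈ s, act r x}

open MulAction

section Trace

variable {G A : Type*} [Group G] [AddCommMonoid A] [DistribMulAction G A]

namespace Subgroup

variable {H : Subgroup G} {x : A}

theorem out_mk_smul (hx : x ∈ fixedPoints H A) (g : G) : (g : G ⧸ H).out • x = g • x := by
  obtain ⟨h, hh⟩ := QuotientGroup.mk_out_eq_mul H g
  rw [hh, mul_smul, ← Subgroup.smul_def, hx]

theorem _root_.MulAction.map_mem_fixedPoints_stabilizer {Y : Type*} [MulAction G Y] {f : Y → A}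
    (hf : ∀ (g : G) (y : Y), f (g • y) = g • f y) (y : Y) :
    f y ∈ fixedPoints (stabilizer G y) A := fun g => by
  rw [Subgroup.smul_def, ← hf, mem_stabilizer_iff.mp g.2]

theorem isRightTransversal_top_iff {s : Finset G} :
    IsRightTransversal H ⊤ s ↔ ∀ c : G ⧸ H, ∃! r, r ∈ s ∧ ((r⁻¹ : G) : G ⧸ H) = c := by
  have key (d r : G) : d * r⁻¹ ∈ H ↔ ((r⁻¹ : G) : G ⧸ H) = ((d⁻¹ : G) : G ⧸ H) := by
    rw [QuotientGroup.eq, inv_inv, ← H.inv_mem_iff, mul_inv_rev, inv_inv]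
  simp only [IsRightTransversal, coe_top, Set.subset_univ, true_and, mem_top, forall_const, key]
  rw [QuotientGroup.mk_surjective.forall, inv_surjective.forall]
  simp only [inv_inv]

theorem exists_isRightTransversal_top [Finite (G ⧸ H)] :
    ∃ s : Finset G, IsRightTransversal H ⊤ s := by
  classical
  have := Fintype.ofFinite (G ⧸ H)
  refine ⟨Finset.univ.image fun c : G ⧸ H => c.out⁻¹, isRightTransversal_top_iff.mpr fun c => ?_⟩
  refine ⟨c.out⁻¹, ⟨Finset.mem_image_of_mem _ (Finset.mem_univ c), by simp⟩, ?_⟩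
  rintro r ⟨hr, rfl⟩
  obtain ⟨c, -, rfl⟩ := Finset.mem_image.mp hr
  simp

variable [Finite G]

/-- For the left action the paper's `Tr_H^G(x) = Σ x^{g_i}` reads `Σ_{gH ∈ G/H} g • x`, since
`x^g = g⁻¹ • x` and the `g_i⁻¹` run over the left cosets. -/
noncomputable def relTrace (H : Subgroup G) : A →+ A :=
  haveI := Fintype.ofFinite (G ⧸ H)
  ∑ c : G ⧸ H, DistribSMul.toAddMonoidHom A c.out

theorem relTrace_apply (H : Subgroup G) [Fintype (G ⧸ H)] (x : A) :
    H.relTrace x = ∑ c : G ⧸ H, c.out • x := by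
  rw [relTrace, AddMonoidHom.finsetSum_apply]
  congr!

theorem relTrace_mem_fixedPoints (hx : x ∈ fixedPoints H A) :
    H.relTrace x ∈ fixedPoints G A := by
  have := Fintype.ofFinite (G ⧸ H)
  intro g
  rw [relTrace_apply, Finset.smul_sum]
  refine Fintype.sum_equiv (MulAction.toPerm g) _ _ fun c => ?_
  rw [← mul_smul, ← out_mk_smul hx, ← smul_eq_mul, ← MulAction.Quotient.smul_mk,
    QuotientGroup.out_eq', toPerm_apply]

theorem relTrace_eq_index_smul (hx : x ∈ fixedPoints G A) : H.relTrace x = H.index • x := by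
  have := Fintype.ofFinite (G ⧸ H)
  simp only [relTrace_apply, hx _, Finset.sum_const, Finset.card_univ, index_eq_card,
    Nat.card_eq_fintype_card]

theorem relTrace_eq_relTrace_relTrace {L K : Subgroup G} (hLK : L ≤ K) (hx : x ∈ fixedPoints L A) :
    L.relTrace x = K.relTrace ((L.subgroupOf K).relTrace x) := by
  have := Fintype.ofFinite (G ⧸ K)
  have := Fintype.ofFinite (K ⧸ L.subgroupOf K)
  have := Fintype.ofFinite (G ⧸ L)
  simp only [relTrace_apply, Finset.smul_sum]
  rw [← Fintype.sum_prod_type']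
  refine (Fintype.sum_equiv (quotientEquivProdOfLE hLK).symm _ _ fun p => ?_).symm
  obtain ⟨d, q⟩ := p
  conv_rhs => rw [quotientEquivProdOfLE_symm_apply, ← QuotientGroup.out_eq' q]
  exact ((out_mk_smul hx _).trans (mul_smul _ _ _)).symm

theorem sum_eq_sum_relTrace_stabilizer {Y : Type*} [MulAction G Y] [Fintype Y]
    [Fintype (orbitRel.Quotient G Y)] {f : Y → A} (hf : ∀ (g : G) (y : Y), f (g • y) = g • f y) :
    ∑ y, f y = ∑ ω : orbitRel.Quotient G Y, (stabilizer G ω.out).relTrace (f ω.out) := by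
  have := Fintype.ofFinite G
  classical
  rw [← (selfEquivSigmaOrbitsQuotientStabilizer G Y).symm.sum_comp, Fintype.sum_sigma]
  refine Fintype.sum_congr _ _ fun ω => ?_
  rw [relTrace_apply]
  refine Fintype.sum_congr _ _ fun q => ?_
  obtain ⟨g, rfl⟩ := QuotientGroup.mk_surjective q
  have hsymm : (selfEquivSigmaOrbitsQuotientStabilizer G Y).symm ⟨ω, g⟩ = g • ω.out := rfl
  rw [hsymm, hf, out_mk_smul (map_mem_fixedPoints_stabilizer hf _)]

theorem sum_inv_smul_eq_relTrace {s : Finset G} (hs : IsRightTransversal H ⊤ s)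
    (hx : x ∈ fixedPoints H A) : ∑ r ∈ s, r⁻¹ • x = H.relTrace x := by
  have := Fintype.ofFinite (G ⧸ H)
  rw [isRightTransversal_top_iff] at hs
  rw [relTrace_apply]
  refine Finset.sum_bij (fun r _ => ((r⁻¹ : G) : G ⧸ H)) (fun _ _ => Finset.mem_univ _)
    (fun r₁ h₁ r₂ h₂ h => (hs _).unique ⟨h₁, rfl⟩ ⟨h₂, h.symm⟩) (fun c _ => ?_)
    (fun r _ => (out_mk_smul hx r⁻¹).symm)
  obtain ⟨r, ⟨hr, hrc⟩, -⟩ := hs c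
  exact ⟨r, hr, hrc⟩

theorem relTraceSet_inv_smul_top (H : Subgroup G) :
    relTraceSet (fun g (x : A) => g⁻¹ • x) H ⊤ = H.relTrace '' fixedPoints H A := by
  have hfix (x : A) : (∀ h ∈ H, h⁻¹ • x = x) ↔ x ∈ fixedPoints H A :=
    ⟨fun hx h => by simpa [Subgroup.smul_def] using hx _ (H.inv_mem h.2),
      fun hx h hh => hx ⟨h⁻¹, H.inv_mem hh⟩⟩
  ext y
  constructor
  · rintro ⟨x, hx, s, hs, rfl⟩
    exact ⟨x, (hfix x).mp hx, (sum_inv_smul_eq_relTrace hs ((hfix x).mp hx)).symm⟩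
  · rintro ⟨x, hx, rfl⟩
    obtain ⟨s, hs⟩ := exists_isRightTransversal_top (H := H)
    exact ⟨x, (hfix x).mpr hx, s, hs, (sum_inv_smul_eq_relTrace hs hx).symm⟩

end Subgroup

end Trace

section GAlgebra

variable {G A : Type*} [Group G] [Ring A] [MulSemiringAction G A]

theorem Units.coe_inv_mem_fixedPoints {u : Aˣ} (hu : (u : A) ∈ fixedPoints G A) :
    (↑u⁻¹ : A) ∈ fixedPoints G A := fun g => by
  refine (Units.inv_eq_of_mul_eq_one_left ?_).symm
  rw [← hu g, ← smul_mul', Units.inv_mul, smul_one]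

theorem MulAction.stabilizer_quotient_mk (H : Subgroup G) (g : G) :
    stabilizer G (g : G ⧸ H) = H.map (MulAut.conj g).toMonoidHom := by
  have : (g : G ⧸ H) = g • ((1 : G) : G ⧸ H) := by rw [Quotient.smul_mk, smul_eq_mul, mul_one]
  rw [this, stabilizer_smul_eq_stabilizer_map_conj, stabilizer_quotient]

namespace Subgroup

theorem smul_mul_mem_fixedPoints_inf_map_conj {H K : Subgroup G} {a b : A}
    (ha : a ∈ fixedPoints H A) (hb : b ∈ fixedPoints K A) (g : G) :
    g • a * b ∈ fixedPoints (K ⊓ H.map (MulAut.conj g).toMonoidHom : Subgroup G) A := by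
  rintro ⟨l, hlK, h, hh, rfl⟩
  have hb' : MulAut.conj g h • b = b := hb ⟨_, hlK⟩
  have ha' : h • a = a := ha ⟨h, hh⟩
  change MulAut.conj g h • (g • a * b) = g • a * b
  rw [smul_mul', hb', MulAut.conj_apply, ← mul_smul, inv_mul_cancel_right, mul_smul, ha']

variable [Finite G]

theorem mul_relTrace {y : A} (hy : y ∈ fixedPoints G A) (H : Subgroup G) (x : A) :
    y * H.relTrace x = H.relTrace (y * x) := by
  have := Fintype.ofFinite (G ⧸ H)
  simp only [relTrace_apply, Finset.mul_sum, smul_mul', hy _]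

theorem relTrace_mul_relTrace {H K : Subgroup G} {a b : A} (ha : a ∈ fixedPoints H A)
    (hb : b ∈ fixedPoints K A) [Fintype (orbitRel.Quotient K (G ⧸ H))] :
    H.relTrace a * K.relTrace b = ∑ ω : orbitRel.Quotient K (G ⧸ H),
      (K ⊓ H.map (MulAut.conj ω.out.out).toMonoidHom).relTrace (ω.out.out • a * b) := by
  have := Fintype.ofFinite (G ⧸ H)
  have hf (k : K) (c : G ⧸ H) : (k • c).out • a * b = k • (c.out • a * b) := by
    have hkc : ((k * c.out : G) : G ⧸ H) = k • c := by
      rw [← smul_eq_mul, ← Quotient.smul_mk, QuotientGroup.out_eq']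
      rfl
    calc (k • c).out • a * b = ((k : G) * c.out) • a * b := by rw [← hkc, out_mk_smul ha]
      _ = k • (c.out • a * b) := by
        rw [smul_mul', hb k, mul_smul]
        rfl
  calc H.relTrace a * K.relTrace b = K.relTrace (∑ c : G ⧸ H, c.out • a * b) := by
        rw [mul_relTrace (relTrace_mem_fixedPoints ha), relTrace_apply H, Finset.sum_mul]
    _ = ∑ ω, K.relTrace ((stabilizer K ω.out).relTrace (ω.out.out • a * b)) := by
        rw [sum_eq_sum_relTrace_stabilizer hf, map_sum]
    _ = _ := Finset.sum_congr rfl fun ω _ => ?_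
  have hstab : stabilizer K ω.out
      = (K ⊓ H.map (MulAut.conj ω.out.out).toMonoidHom).subgroupOf K := by
    rw [inf_subgroupOf_left, ← stabilizer_quotient_mk, QuotientGroup.out_eq']
    rfl
  rw [hstab, ← relTrace_eq_relTrace_relTrace inf_le_left
    (smul_mul_mem_fixedPoints_inf_map_conj ha hb _)]

end Subgroup

end GAlgebra

section Vertex

variable {G : Type*} [Group G] [Finite G] (A : Type*) [Ring A] [MulSemiringAction G A]

def IsRelativelyProjective (H : Subgroup G) : Prop :=
  (1 : A) ∈ H.relTrace '' fixedPoints H A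

variable {A}

theorem isRelativelyProjective_of_isUnit_index {H : Subgroup G} (h : IsUnit (H.index : A)) :
    IsRelativelyProjective A H := by
  obtain ⟨u, hu⟩ := h
  have hfix : (↑u⁻¹ : A) ∈ fixedPoints G A :=
    Units.coe_inv_mem_fixedPoints fun g => by
      rw [hu]
      exact map_natCast (MulSemiringAction.toRingHom G A g) _
  refine ⟨↑u⁻¹, fun h => hfix h, ?_⟩
  rw [Subgroup.relTrace_eq_index_smul hfix, nsmul_eq_mul, ← hu, Units.mul_inv]

variable [IsLocalRing (FixedPoints.subring A G)]

theorem IsRelativelyProjective.exists_le_map_conj {H K : Subgroup G}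
    (hH : IsRelativelyProjective A H) (hK : IsRelativelyProjective A K) :
    ∃ g : G, ∃ L ≤ K, L ≤ H.map (MulAut.conj g).toMonoidHom ∧ IsRelativelyProjective A L := by
  obtain ⟨a, ha, hta⟩ := hH
  obtain ⟨b, hb, htb⟩ := hK
  have := Fintype.ofFinite (orbitRel.Quotient K (G ⧸ H))
  set L : orbitRel.Quotient K (G ⧸ H) → Subgroup G :=
    fun ω => K ⊓ H.map (MulAut.conj ω.out.out).toMonoidHom
  have hz (ω) : ω.out.out • a * b ∈ fixedPoints (L ω) A :=
    Subgroup.smul_mul_mem_fixedPoints_inf_map_conj ha hb _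
  let t (ω) : FixedPoints.subring A G :=
    ⟨(L ω).relTrace (ω.out.out • a * b), Subgroup.relTrace_mem_fixedPoints (hz ω)⟩
  have ht : ∑ ω, t ω = 1 := Subtype.ext <| by
    have : H.relTrace a * K.relTrace b = 1 := by rw [hta, htb, one_mul]
    rw [AddSubmonoidClass.coe_finsetSum, OneMemClass.coe_one, ← this,
      Subgroup.relTrace_mul_relTrace ha hb]
  obtain ⟨ω, -, hω⟩ := IsLocalRing.exists_of_isUnit_sum (ht ▸ isUnit_one)
  obtain ⟨v, hv⟩ := hω.exists_left_inv
  refine ⟨ω.out.out, L ω, inf_le_left, inf_le_right, v * (ω.out.out • a * b), fun l => ?_, ?_⟩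
  · have hv' : (v : A) ∈ fixedPoints G A := v.2
    rw [smul_mul', hz ω l, Subgroup.smul_def, hv']
  · rw [← Subgroup.mul_relTrace v.2]
    exact congrArg Subtype.val hv

theorem exists_isRelativelyProjective_forall_le_map_conj :
    ∃ V : Subgroup G, IsRelativelyProjective A V ∧ ∀ H : Subgroup G,
      IsRelativelyProjective A H → ∃ g : G, V ≤ H.map (MulAut.conj g).toMonoidHom := by
  obtain ⟨V, hV, hmin⟩ := exists_minimal_of_wellFoundedLT (IsRelativelyProjective A)
    ⟨(⊤ : Subgroup G), isRelativelyProjective_of_isUnit_index (by simp)⟩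
  refine ⟨V, hV, fun H hH => ?_⟩
  obtain ⟨g, L, hLV, hLH, hL⟩ := hH.exists_le_map_conj hV
  exact ⟨g, (hmin hL hLV).trans hLH⟩

end Vertex

section ProjectiveRepresentation

variable {G F A : Type*} [Group G] [CommSemiring F] [Semiring A] [Algebra F A]

theorem Units.conj_eq_of_coe_eq_smul {u v : Aˣ} {c : Fˣ} (h : (u : A) = (c : F) • (v : A))
    (x : A) : (u : A) * x * ↑u⁻¹ = v * x * ↑v⁻¹ := by
  have hinv : (↑u⁻¹ : A) = ((c⁻¹ : Fˣ) : F) • (↑v⁻¹ : A) :=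
    Units.inv_eq_of_mul_eq_one_right <| by
      rw [h, smul_mul_smul_comm, Units.mul_inv, Units.mul_inv, one_smul]
  rw [h, hinv, smul_mul_assoc, smul_mul_smul_comm, Units.mul_inv, one_smul]

variable {α : G → G → Fˣ} {X : G → Aˣ}

def projConj (hX : ∀ g h, (X g : A) * X h = (α g h : F) • (X (g * h) : A)) : G →* RingAut A :=
  MonoidHom.mk' (fun g => MulSemiringAction.toRingAut (ConjAct Aˣ) A (ConjAct.toConjAct (X g)))
    fun g h => by
      rw [← map_mul, ← map_mul]
      ext x
      simp only [MulSemiringAction.toRingAut_apply, MulSemiringAction.toRingEquiv_apply_apply,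
        ConjAct.units_smul_def, ConjAct.ofConjAct_toConjAct]
      exact Units.conj_eq_of_coe_eq_smul (by rw [Units.val_mul, hX]) x |>.symm

variable (hX : ∀ g h, (X g : A) * X h = (α g h : F) • (X (g * h) : A))

theorem projConj_apply (g : G) (x : A) : projConj hX g x = X g * x * ↑(X g)⁻¹ :=
  ConjAct.units_smul_def _ x

theorem projConj_inv_apply (g : G) (x : A) : projConj hX g⁻¹ x = ↑(X g)⁻¹ * x * X g := by
  rw [map_inv]
  refine (RingEquiv.symm_apply_eq (projConj hX g)).mpr ?_
  rw [projConj_apply, ← mul_assoc, ← mul_assoc, Units.mul_inv, one_mul, mul_assoc, Units.mul_inv,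
    mul_one]

end ProjectiveRepresentation

section ConjugationAction

variable {G F A : Type*} [Group G] [Field F] [Ring A] [Algebra F A] [MulSemiringAction G A]
  {X : G → Aˣ} (hsmul : ∀ (g : G) (x : A), g • x = X g * x * ↑(X g)⁻¹)
  (hspan : Submodule.span F (Set.range fun g => (X g : A)) = ⊤)
include hsmul hspan

theorem mem_center_of_mem_fixedPoints {x : A} (hx : x ∈ fixedPoints G A) :
    x ∈ Subalgebra.center F A := by
  refine Subalgebra.mem_center_iff.mpr fun y => ?_
  have hy : y ∈ Submodule.span F (Set.range fun g => (X g : A)) := hspan ▸ Submodule.mem_top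
  induction hy using Submodule.span_induction with
  | mem y hy =>
    obtain ⟨g, rfl⟩ := hy
    show (X g : A) * x = x * X g
    have hgx : (X g : A) * x * ↑(X g)⁻¹ = x := (hsmul g x).symm.trans (hx g)
    calc (X g : A) * x = X g * x * ↑(X g)⁻¹ * X g := (Units.inv_mul_cancel_right _ _).symm
      _ = x * X g := by rw [hgx]
  | zero => simp
  | add y z _ _ hy hz => rw [add_mul, mul_add, hy, hz]
  | smul c y _ hy => rw [smul_mul_assoc, mul_smul_comm, hy]

theorem isLocalRing_fixedPoints_subring [Algebra.IsCentral F A] [Nontrivial A] :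
    IsLocalRing (FixedPoints.subring A G) := by
  refine .of_isUnit_or_isUnit_one_sub_self fun a => ?_
  obtain ⟨c, hc⟩ := Algebra.mem_bot.mp
    (Algebra.IsCentral.out (mem_center_of_mem_fixedPoints hsmul hspan a.2))
  rcases eq_or_ne c 0 with rfl | hc0
  · right
    rw [map_zero] at hc
    rw [show a = 0 from Subtype.ext hc.symm, sub_zero]
    exact isUnit_one
  · left
    obtain ⟨u, hu⟩ := hc0.isUnit.map (algebraMap F A)
    have hua : (u : A) ∈ fixedPoints G A := hu ▸ hc ▸ a.2
    exact isUnit_iff_exists.mpr ⟨⟨_, Units.coe_inv_mem_fixedPoints hua⟩,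
      Subtype.ext (by simp [← hc, ← hu]), Subtype.ext (by simp [← hc, ← hu])⟩

end ConjugationAction

/-- Let `F` be a field of characteristic `p`, `G` a finite group and
`X : G → GL_s(F)` a projective representation with factor set `α` whose image spans `M_s(F)`.
Regard `A = M_s(F)` as a `G`-algebra via `x^g = X(g)⁻¹ x X(g)`.  Then there is a `p`-subgroup
`V ≤ G` such that (1) `I_s ∈ Tr_V^G(A^V)`, and (2) every subgroup `H ≤ G` with
`I_s ∈ Tr_H^G(A^H)` admits a `G`-conjugate containing `V`. -/
theorem stmt_9 (p : ℕ) (hp : p.Prime) (F : Type) [Field F] [CharP F p]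
    (G : Type) [Group G] [Fintype G]
    (s : ℕ) (X : G → (Matrix (Fin s) (Fin s) F)ˣ) (α : G → G → Fˣ)
    (hX : ∀ g h : G,
      (↑(X g) : Matrix (Fin s) (Fin s) F) * (↑(X h) : Matrix (Fin s) (Fin s) F)
        = (↑(α g h) : F) • (↑(X (g * h)) : Matrix (Fin s) (Fin s) F))
    (hspan : Submodule.span F
        (Set.range fun g : G => (↑(X g) : Matrix (Fin s) (Fin s) F)) = ⊤) :
    ∃ V : Subgroup G, IsPGroup p V ∧
      (1 : Matrix (Fin s) (Fin s) F) ∈ relTraceSet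
        (fun g x => (↑((X g)⁻¹) : Matrix (Fin s) (Fin s) F) * x
          * (↑(X g) : Matrix (Fin s) (Fin s) F)) V ⊤ ∧
      ∀ H : Subgroup G,
        (1 : Matrix (Fin s) (Fin s) F) ∈ relTraceSet
          (fun g x => (↑((X g)⁻¹) : Matrix (Fin s) (Fin s) F) * x
            * (↑(X g) : Matrix (Fin s) (Fin s) F)) H ⊤ →
        ∃ g : G, V ≤ Subgroup.map (MulAut.conj g).toMonoidHom H := by
  let _ : MulSemiringAction G (Matrix (Fin s) (Fin s) F) := .compHom _ (projConj hX)
  have hact : (fun g x => (↑((X g)⁻¹) : Matrix (Fin s) (Fin s) F) * x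
      * (↑(X g) : Matrix (Fin s) (Fin s) F)) = fun g x => g⁻¹ • x :=
    funext₂ fun g x => (projConj_inv_apply hX g x).symm
  simp only [hact, Subgroup.relTraceSet_inv_smul_top]
  rcases subsingleton_or_nontrivial (Matrix (Fin s) (Fin s) F) with _ | _
  · exact ⟨⊥, IsPGroup.of_bot, ⟨0, fun _ => smul_zero _, Subsingleton.elim _ _⟩,
      fun _ _ => ⟨1, bot_le⟩⟩
  have := isLocalRing_fixedPoints_subring (F := F) (projConj_apply hX) hspan
  obtain ⟨V, hV, hVmin⟩ :=
    exists_isRelativelyProjective_forall_le_map_conj (G := G) (A := Matrix (Fin s) (Fin s) F)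
  have := Fact.mk hp
  obtain ⟨P⟩ : Nonempty (Sylow p G) := Sylow.nonempty
  have hP : IsRelativelyProjective (Matrix (Fin s) (Fin s) F) (P : Subgroup G) := by
    refine isRelativelyProjective_of_isUnit_index ?_
    rw [← map_natCast (algebraMap F _)]
    exact (Ne.isUnit ((CharP.cast_eq_zero_iff F p _).not.mpr P.not_dvd_index)).map _
  obtain ⟨g, hg⟩ := hVmin P hP
  exact ⟨V, (P.isPGroup'.map _).to_le hg, hV, hVmin⟩
end

section
/- Let G be a finite group with a normal subgroup N, let K ⊆ E be a field extension of finite degree s, and let A = M_m(E). Suppose G acts on A on the right by K-algebra automorphisms x ↦ x^g; suppose for each g ∈ G there is a field automorphism σ_g of E fixing K pointwise such that (z·x)^g = σ_g(z)·x^g for all z ∈ E and x ∈ A; and suppose X : N → GL_m(E) is a group homomorphism with x^n = X(n)⁻¹ x X(n) for all n ∈ N, x ∈ A, and X(n)^g = X(g⁻¹ n g) for all n ∈ N, g ∈ G. Let ι, ι' : A → M_{ms}(K) be two unitary embeddings of K-algebras, and let Y, Y' : G → GL_{ms}(K) be functions such that Y satisfies conditions (1)–(3) with respect to ι and Y' satisfies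 them with respect to ι' (namely Y(g)⁻¹ι(x)Y(g) = ι(x^g), Y(n) = ι(X(n)), Y(gn) = Y(g)Y(n), Y(ng) = Y(n)Y(g), and the analogous identities for Y' and ι'). Let α, α' : G × G → E^× be the functions determined by Y(g)Y(h) = Y(gh)·ι(α(g,h)·I_m) and Y'(g)Y'(h) = Y'(gh)·ι'(α'(g,h)·I_m). Then there exists a function γ : G → E^× satisfying γ(gn) = γ(g) for all g ∈ G, n ∈ N (in particular γ(n) = 1 for n ∈ N), such that α'(g,h) = α(g,h)·σ_h(γ(g))·γ(h)·γ(gh)⁻¹ for all g, h ∈ G; that is, the factor sets α and α' are cohomologous via a function constant on N-cosets, so they determine the same class in H²(G/N, E^×). -/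
/-!
Skolem–Noether: an injective `K`-algebra map `ι : M_m(E) → M_{ms}(K)` makes `K^{ms}` an
`M_m(E)`-module, which is isomorphic to `E^m` because it contains a copy of `E^m` of the same
`K`-dimension. Hence `ι` and `ι'` are conjugate by some `M`, and `Z(g) = M Y'(g) M⁻¹` satisfies
(1)–(3) for `ι` with factor set `α'`. The same model `E^m` shows that the centralizer of
`ι(M_m(E))` consists of the scalars `ι(z)`, `z ∈ E`; so `Z(g) = Y(g) ι(γ(g))`, and expanding
`Z(g) Z(h)` with (1) gives the coboundary relation, while `Z = Y` on `N` gives `γ(gn) = γ(g)`.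
-/

open Matrix Module

theorem Matrix.eq_smul_of_forall_map_mulVec {R l : Type*} [CommRing R] [Fintype l] [DecidableEq l]
    {f : (l → R) → l → R} (hf : ∀ x w, f (x *ᵥ w) = x *ᵥ f w) (o : l) (w : l → R) :
    f w = f (Pi.single o 1) o • w := by
  have hw : vecMulVec w (Pi.single o 1) *ᵥ Pi.single o 1 = w := by
    ext i
    simp [vecMulVec_apply]
  have ho : single o o 1 *ᵥ Pi.single o (1 : R) = Pi.single o 1 := by
    ext i
    simp [single_apply, Pi.single_apply, eq_comm]
  calc f w = vecMulVec w (Pi.single o 1) *ᵥ (single o o 1 *ᵥ f (Pi.single o 1)) := by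
        rw [← hf, ho, ← hf, hw]
    _ = f (Pi.single o 1) o • w := by
        rw [mulVec_mulVec, vecMulVec_mul]
        ext i
        simp [vecMulVec_mulVec, dotProduct, single_apply, mul_comm]

section

variable {K E : Type*} [Field K] [Field E] [Algebra K E] [FiniteDimensional K E]
  {l n : Type*} [Fintype l] [DecidableEq l] [Nonempty l] [Fintype n] [DecidableEq n]

theorem exists_linearEquiv_mulVec_eq
    (hcard : Fintype.card n = Fintype.card l * finrank K E)
    {ι : Matrix l l E →ₐ[K] Matrix n n K} (hι : Function.Injective ι) :
    ∃ S : (l → E) ≃ₗ[K] (n → K), ∀ x w, S (x *ᵥ w) = ι x *ᵥ S w := by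
  obtain ⟨o⟩ := ‹Nonempty l›
  obtain ⟨v, hv⟩ : ∃ v, ι (single o o 1) *ᵥ v ≠ 0 := by
    by_contra! h
    have : ι (single o o 1) = ι 0 := by
      rw [map_zero, ext_iff_mulVec]
      simpa using h
    simpa using congrFun (congrFun (hι this) o) o
  let S : (l → E) →ₗ[K] (n → K) :=
    { toFun w := ι (vecMulVec w (Pi.single o 1)) *ᵥ v
      map_add' _ _ := by simp [add_vecMulVec, add_mulVec]
      map_smul' _ _ := by simp [smul_vecMulVec, smul_mulVec] }
  have hS : ∀ x w, S (x *ᵥ w) = ι x *ᵥ S w := by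
    intro x w
    simp [S, mulVec_mulVec, ← map_mul, mul_vecMulVec]
  have hinj : Function.Injective S := by
    rw [← LinearMap.ker_eq_bot, LinearMap.ker_eq_bot']
    intro w hw
    by_contra! hne
    obtain ⟨i, hi⟩ := Function.ne_iff.mp hne
    have : single o i (w i)⁻¹ * vecMulVec w (Pi.single o 1) = single o o 1 := by
      rw [mul_vecMulVec, single_mulVec_eq, inv_mul_cancel₀ hi, one_smul,
        single_eq_single_vecMulVec_single]
    apply hv
    rw [← this, map_mul, ← mulVec_mulVec]
    exact (congrArg _ hw).trans (mulVec_zero _)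
  have hrank : finrank K (l → E) = finrank K (n → K) := by
    simp [hcard, Module.finrank_pi_fintype]
  exact ⟨.ofBijective S
    ⟨hinj, (LinearMap.injective_iff_surjective_of_finrank_eq_finrank hrank).mp hinj⟩, hS⟩

theorem exists_conj_eq_of_injective (hcard : Fintype.card n = Fintype.card l * finrank K E)
    {ι ι' : Matrix l l E →ₐ[K] Matrix n n K} (hι : Function.Injective ι)
    (hι' : Function.Injective ι') :
    ∃ M : GL n K, ∀ x, (M : Matrix n n K) * ι' x * (↑M⁻¹ : Matrix n n K) = ι x := by
  obtain ⟨S, hS⟩ := exists_linearEquiv_mulVec_eq hcard hι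
  obtain ⟨S', hS'⟩ := exists_linearEquiv_mulVec_eq hcard hι'
  let T := S'.symm ≪≫ₗ S
  have hT : ∀ x w, T (ι' x *ᵥ w) = ι x *ᵥ T w := by
    intro x w
    obtain ⟨w, rfl⟩ := S'.surjective w
    simp [T, ← hS', ← hS]
  let M : GL n K := GeneralLinearGroup.toLin.symm (LinearMap.GeneralLinearGroup.ofLinearEquiv T)
  have hM : ∀ w, (M : Matrix n n K) *ᵥ w = T w := fun w => by
    simp [M, ← mulVecLin_apply, ← GeneralLinearGroup.coe_toLin]
  refine ⟨M, fun x => (Units.mul_inv_eq_iff_eq_mul M).mpr (ext_iff_mulVec.mpr fun w => ?_)⟩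
  simp [← mulVec_mulVec, hM, hT]

theorem exists_eq_smul_one_of_commute (hcard : Fintype.card n = Fintype.card l * finrank K E)
    {ι : Matrix l l E →ₐ[K] Matrix n n K} (hι : Function.Injective ι) {u : Matrix n n K}
    (hu : ∀ x, u * ι x = ι x * u) : ∃ z : E, u = ι (z • 1) := by
  obtain ⟨o⟩ := ‹Nonempty l›
  obtain ⟨S, hS⟩ := exists_linearEquiv_mulVec_eq hcard hι
  let f w := S.symm (u *ᵥ S w)
  have hf : ∀ x w, f (x *ᵥ w) = x *ᵥ f w := by
    intro x w
    apply S.injective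
    simp [f, hS, mulVec_mulVec, hu]
  refine ⟨f (Pi.single o 1) o, ext_iff_mulVec.mpr fun v => ?_⟩
  obtain ⟨w, rfl⟩ := S.surjective v
  rw [← hS, smul_mulVec, one_mulVec, ← eq_smul_of_forall_map_mulVec hf o w]
  simp [f]

theorem exists_units_eq_smul_one_of_commute
    (hcard : Fintype.card n = Fintype.card l * finrank K E)
    {ι : Matrix l l E →ₐ[K] Matrix n n K} (hι : Function.Injective ι) (u : GL n K)
    (hu : ∀ x, (u : Matrix n n K) * ι x = ι x * u) : ∃ z : Eˣ, ↑u = ι ((z : E) • 1) := by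
  obtain ⟨z, hz⟩ := exists_eq_smul_one_of_commute hcard hι hu
  have : z ≠ 0 := by
    rintro rfl
    have := hι.nontrivial
    exact u.ne_zero (by rwa [zero_smul, map_zero] at hz)
  exact ⟨.mk0 z this, hz⟩

end

section

variable {K E A B : Type*} [CommSemiring K] [Field E] [Ring A] [Algebra K A] [Algebra E A]
  [Ring B] [Algebra K B] {ι : A →ₐ[K] B}

theorem AlgHom.smul_one_injective [Nontrivial A] (hι : Function.Injective ι) :
    Function.Injective fun z : E => ι (z • 1) := by
  intro a b h
  simp only [← Algebra.algebraMap_eq_smul_one] at h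
  exact (algebraMap E A).injective (hι h)

theorem AlgHom.smul_one_mul_smul_one (ι : A →ₐ[K] B) (a b : E) :
    ι (a • 1) * ι (b • 1) = ι ((a * b) • 1) := by
  rw [← map_mul, smul_one_mul, smul_smul]

theorem AlgHom.commute_smul_one (ι : A →ₐ[K] B) (z : E) (x : A) :
    ι (z • 1) * ι x = ι x * ι (z • 1) := by
  rw [← map_mul, ← map_mul, smul_one_mul, mul_smul_one]

theorem smul_one_mul_units_of_conj {a : A ≃ₐ[K] A} {σ : E → E}
    (ha : ∀ (z : E) x, a (z • x) = σ z • a x) {Y : Bˣ}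
    (hY : ∀ x, ↑Y⁻¹ * ι x * ↑Y = ι (a x)) (z : E) :
    ι (z • 1) * ↑Y = ↑Y * ι (σ z • 1) := by
  have : σ z • (1 : A) = a (z • 1) := by rw [ha, map_one]
  rw [this, ← hY, ← mul_assoc, ← mul_assoc, Units.mul_inv, one_mul]

theorem commute_inv_mul_of_conj {a : A ≃ₐ[K] A} {Y Z : Bˣ}
    (hY : ∀ x, ↑Y⁻¹ * ι x * ↑Y = ι (a x)) (hZ : ∀ x, ↑Z⁻¹ * ι x * ↑Z = ι (a x)) (x : A) :
    ↑(Y⁻¹ * Z) * ι x = ι x * ↑(Y⁻¹ * Z) := by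
  obtain ⟨x, rfl⟩ := a.surjective x
  conv_lhs => rw [← hZ x]
  conv_rhs => rw [← hY x]
  simp [mul_assoc]

variable {G : Type*} [Group G] {Y Z : G → Bˣ} {γ : G → Eˣ}

theorem apply_mul_eq_of_eq_mul_smul_one [Nontrivial A] (hι : Function.Injective ι)
    (hZ : ∀ g, ↑(Z g) = ↑(Y g) * ι ((γ g : E) • 1)) {g n : G} (hY : Y (g * n) = Y g * Y n)
    (hZm : Z (g * n) = Z g * Z n) (hn : Z n = Y n)
    (hcomm : ∀ z : E, ι (z • 1) * ↑(Y n) = ↑(Y n) * ι (z • 1)) :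
    γ (g * n) = γ g := by
  refine Units.ext <| AlgHom.smul_one_injective hι <| (Units.mul_right_inj (Y (g * n))).mp ?_
  calc ↑(Y (g * n)) * ι ((γ (g * n) : E) • 1) = ↑(Z g) * ↑(Z n) := by rw [← hZ, hZm, Units.val_mul]
    _ = ↑(Y (g * n)) * ι ((γ g : E) • 1) := by
      rw [hZ, hn, mul_assoc, hcomm, hY, Units.val_mul, mul_assoc]

theorem cocycle_eq_of_eq_mul_smul_one [Nontrivial A] (hι : Function.Injective ι)
    {act : G → A ≃ₐ[K] A} {σ : G → E → E} (hσ : ∀ g (z : E) x, act g (z • x) = σ g z • act g x)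
    (hY : ∀ x g, ↑(Y g)⁻¹ * ι x * ↑(Y g) = ι (act g x)) {α β : G → G → Eˣ}
    (hα : ∀ g h, ↑(Y g) * ↑(Y h) = ↑(Y (g * h)) * ι ((α g h : E) • 1))
    (hβ : ∀ g h, ↑(Z g) * ↑(Z h) = ↑(Z (g * h)) * ι ((β g h : E) • 1))
    (hZ : ∀ g, ↑(Z g) = ↑(Y g) * ι ((γ g : E) • 1)) (g h : G) :
    (β g h : E) = α g h * σ h (γ g) * γ h * (↑(γ (g * h))⁻¹ : E) := by
  have key : (γ (g * h) : E) * β g h = α g h * σ h (γ g) * γ h := by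
    refine AlgHom.smul_one_injective hι <| (Units.mul_right_inj (Y (g * h))).mp ?_
    calc ↑(Y (g * h)) * ι (((γ (g * h) : E) * β g h) • 1) = ↑(Z g) * ↑(Z h) := by
          rw [← ι.smul_one_mul_smul_one, ← mul_assoc, ← hZ, hβ]
      _ = ↑(Y g) * ↑(Y h) * (ι (σ h (γ g) • 1) * ι ((γ h : E) • 1)) := by
          rw [hZ, hZ, mul_assoc, ← mul_assoc (ι _), smul_one_mul_units_of_conj (hσ h) (hY · h)]
          simp only [mul_assoc]
      _ = ↑(Y (g * h)) * ι ((α g h * σ h (γ g) * γ h : E) • 1) := by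
          rw [hα, mul_assoc, ι.smul_one_mul_smul_one, ι.smul_one_mul_smul_one, mul_assoc]
  rw [Units.val_inv_eq_inv_val, eq_mul_inv_iff_mul_eq₀ (γ _).ne_zero, mul_comm, key]

theorem exists_cohomologous_of_centralizer [Nontrivial A] (hι : Function.Injective ι)
    (hcent : ∀ u : Bˣ, (∀ x, ↑u * ι x = ι x * ↑u) → ∃ z : Eˣ, ↑u = ι ((z : E) • 1))
    {act : G → A ≃ₐ[K] A} {σ : G → E → E} (hσ : ∀ g (z : E) x, act g (z • x) = σ g z • act g x)
    {N : Subgroup G} {X : N → A}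
    (hY1 : ∀ x g, ↑(Y g)⁻¹ * ι x * ↑(Y g) = ι (act g x)) (hY2 : ∀ n : N, ↑(Y n) = ι (X n))
    (hY3 : ∀ g (n : N), Y (g * n) = Y g * Y n)
    (hZ1 : ∀ x g, ↑(Z g)⁻¹ * ι x * ↑(Z g) = ι (act g x)) (hZ2 : ∀ n : N, ↑(Z n) = ι (X n))
    (hZ3 : ∀ g (n : N), Z (g * n) = Z g * Z n) {α β : G → G → Eˣ}
    (hα : ∀ g h, ↑(Y g) * ↑(Y h) = ↑(Y (g * h)) * ι ((α g h : E) • 1))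
    (hβ : ∀ g h, ↑(Z g) * ↑(Z h) = ↑(Z (g * h)) * ι ((β g h : E) • 1)) :
    ∃ γ : G → Eˣ, (∀ g (n : N), γ (g * n) = γ g) ∧ (∀ n : N, γ n = 1) ∧
      ∀ g h, (β g h : E) = α g h * σ h (γ g) * γ h * (↑(γ (g * h))⁻¹ : E) := by
  choose γ hγ using fun g => hcent _ (commute_inv_mul_of_conj (hY1 · g) (hZ1 · g))
  replace hγ : ∀ g, ↑(Z g) = ↑(Y g) * ι ((γ g : E) • 1) := fun g => by
    rw [← hγ g, Units.val_mul, Units.mul_inv_cancel_left]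
  have hZY : ∀ n : N, Z n = Y n := fun n => Units.ext <| (hZ2 n).trans (hY2 n).symm
  refine ⟨γ, fun g n => ?_, fun n => ?_, cocycle_eq_of_eq_mul_smul_one hι hσ hY1 hα hβ hγ⟩
  · exact apply_mul_eq_of_eq_mul_smul_one hι hγ (hY3 g n) (hZ3 g n) (hZY n)
      fun z => by rw [hY2, ι.commute_smul_one]
  · refine Units.ext <| AlgHom.smul_one_injective hι <| (Units.mul_right_inj (Y n)).mp ?_
    rw [← hγ, hZY]
    simp only [Units.val_one, one_smul, map_one, mul_one]

end

theorem stmt_10_general (G : Type) [Group G] (N : Subgroup G)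
    (K E : Type) [Field K] [Field E] [Algebra K E] [FiniteDimensional K E]
    (s : ℕ) (hs : Module.finrank K E = s) (m : ℕ) (hm : 0 < m)
    (act : G → (Matrix (Fin m) (Fin m) E ≃ₐ[K] Matrix (Fin m) (Fin m) E))
    (σ : G → (E ≃ₐ[K] E))
    (hσ : ∀ (g : G) (z : E) (x : Matrix (Fin m) (Fin m) E),
      act g (z • x) = σ g z • act g x)
    (X : N →* (Matrix (Fin m) (Fin m) E)ˣ)
    (ι ι' : Matrix (Fin m) (Fin m) E →ₐ[K] Matrix (Fin (m * s)) (Fin (m * s)) K)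
    (hι : Function.Injective ⇑ι) (hι' : Function.Injective ⇑ι')
    (Y Y' : G → (Matrix (Fin (m * s)) (Fin (m * s)) K)ˣ)
    (hY1 : ∀ (x : Matrix (Fin m) (Fin m) E) (g : G),
      (↑((Y g)⁻¹) : Matrix (Fin (m * s)) (Fin (m * s)) K) * ι x
          * (↑(Y g) : Matrix (Fin (m * s)) (Fin (m * s)) K) = ι (act g x))
    (hY2 : ∀ n : N, (↑(Y ↑n) : Matrix (Fin (m * s)) (Fin (m * s)) K)
        = ι (↑(X n) : Matrix (Fin m) (Fin m) E))
    (hY3 : ∀ (g : G) (n : N), Y (g * ↑n) = Y g * Y ↑n ∧ Y (↑n * g) = Y ↑n * Y g)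
    (hY1' : ∀ (x : Matrix (Fin m) (Fin m) E) (g : G),
      (↑((Y' g)⁻¹) : Matrix (Fin (m * s)) (Fin (m * s)) K) * ι' x
          * (↑(Y' g) : Matrix (Fin (m * s)) (Fin (m * s)) K) = ι' (act g x))
    (hY2' : ∀ n : N, (↑(Y' ↑n) : Matrix (Fin (m * s)) (Fin (m * s)) K)
        = ι' (↑(X n) : Matrix (Fin m) (Fin m) E))
    (hY3' : ∀ (g : G) (n : N), Y' (g * ↑n) = Y' g * Y' ↑n ∧ Y' (↑n * g) = Y' ↑n * Y' g)
    (α α' : G → G → Eˣ)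
    (hα : ∀ g h : G,
      (↑(Y g) : Matrix (Fin (m * s)) (Fin (m * s)) K)
          * (↑(Y h) : Matrix (Fin (m * s)) (Fin (m * s)) K)
        = (↑(Y (g * h)) : Matrix (Fin (m * s)) (Fin (m * s)) K)
          * ι ((↑(α g h) : E) • (1 : Matrix (Fin m) (Fin m) E)))
    (hα' : ∀ g h : G,
      (↑(Y' g) : Matrix (Fin (m * s)) (Fin (m * s)) K)
          * (↑(Y' h) : Matrix (Fin (m * s)) (Fin (m * s)) K)
        = (↑(Y' (g * h)) : Matrix (Fin (m * s)) (Fin (m * s)) K)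
          * ι' ((↑(α' g h) : E) • (1 : Matrix (Fin m) (Fin m) E))) :
    ∃ γ : G → Eˣ,
      (∀ (g : G) (n : N), γ (g * ↑n) = γ g) ∧
      (∀ n : N, γ ↑n = 1) ∧
      (∀ g h : G,
        (↑(α' g h) : E)
          = (↑(α g h) : E) * σ h (↑(γ g) : E) * (↑(γ h) : E) * (↑(γ (g * h))⁻¹ : E)) := by
  have : Nonempty (Fin m) := ⟨⟨0, hm⟩⟩
  have hcard : Fintype.card (Fin (m * s)) = Fintype.card (Fin m) * finrank K E := by simp [hs]
  obtain ⟨M, hM⟩ := exists_conj_eq_of_injective hcard hι hι'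
  let conjM := MulSemiringAction.toRingHom _ (Matrix (Fin (m * s)) (Fin (m * s)) K)
    (ConjAct.toConjAct M)
  replace hM : ∀ x, conjM (ι' x) = ι x := hM
  let Z g := Units.map conjM.toMonoidHom (Y' g)
  refine exists_cohomologous_of_centralizer (Z := Z) hι
    (exists_units_eq_smul_one_of_commute hcard hι) (fun g => hσ g) hY1 hY2
    (fun g n => (hY3 g n).1) (fun x g => ?_) (fun n => ?_) (fun g n => ?_) hα (fun g h => ?_)
  all_goals simp only [Z, Units.coe_map_inv, Units.coe_map, RingHom.toMonoidHom_eq_coe,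
    MonoidHom.coe_coe]
  · simp only [← hM, ← hY1', map_mul]
  · simp only [hY2', hM]
  · simp only [(hY3' g n).1, map_mul]
  · simp only [← hM, ← map_mul, hα']

/-- In the setting of Statements 3–4, given two unitary embeddings `ι, ι'`
with corresponding functions `Y, Y'` satisfying conditions (1)–(3), and the factor sets
`α, α' : G × G → Eˣ` they determine, there is `γ : G → Eˣ`, constant on `N`-cosets with
`γ(n) = 1` on `N`, such that `α'(g,h) = α(g,h)·σ_h(γ(g))·γ(h)·γ(gh)⁻¹`; i.e. `α` and `α'` are
cohomologous via a function constant on `N`-cosets, so they give the same class in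
`H²(G/N, E^×)`. -/
theorem stmt_10 (G : Type) [Group G] [Fintype G] (N : Subgroup G) (hN : N.Normal)
    (K E : Type) [Field K] [Field E] [Algebra K E] [FiniteDimensional K E]
    (s : ℕ) (hs : Module.finrank K E = s) (m : ℕ) (hm : 0 < m)
    (act : G → (Matrix (Fin m) (Fin m) E ≃ₐ[K] Matrix (Fin m) (Fin m) E))
    (hact1 : ∀ x : Matrix (Fin m) (Fin m) E, act 1 x = x)
    (hactmul : ∀ (g h : G) (x : Matrix (Fin m) (Fin m) E), act h (act g x) = act (g * h) x)
    (σ : G → (E ≃ₐ[K] E))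
    (hσ : ∀ (g : G) (z : E) (x : Matrix (Fin m) (Fin m) E),
      act g (z • x) = σ g z • act g x)
    (X : N →* (Matrix (Fin m) (Fin m) E)ˣ)
    (hXconj : ∀ (n : N) (x : Matrix (Fin m) (Fin m) E),
      act ↑n x = (↑((X n)⁻¹) : Matrix (Fin m) (Fin m) E) * x * (↑(X n) : Matrix (Fin m) (Fin m) E))
    (hXact : ∀ (n : N) (g : G),
      act g (↑(X n) : Matrix (Fin m) (Fin m) E)
        = (↑(X ⟨g⁻¹ * ↑n * g, hN.conj_mem' ↑n n.2 g⟩) : Matrix (Fin m) (Fin m) E))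
    (ι ι' : Matrix (Fin m) (Fin m) E →ₐ[K] Matrix (Fin (m * s)) (Fin (m * s)) K)
    (hι : Function.Injective ⇑ι) (hι' : Function.Injective ⇑ι')
    (Y Y' : G → (Matrix (Fin (m * s)) (Fin (m * s)) K)ˣ)
    (hY1 : ∀ (x : Matrix (Fin m) (Fin m) E) (g : G),
      (↑((Y g)⁻¹) : Matrix (Fin (m * s)) (Fin (m * s)) K) * ι x
          * (↑(Y g) : Matrix (Fin (m * s)) (Fin (m * s)) K) = ι (act g x))
    (hY2 : ∀ n : N, (↑(Y ↑n) : Matrix (Fin (m * s)) (Fin (m * s)) K)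
        = ι (↑(X n) : Matrix (Fin m) (Fin m) E))
    (hY3 : ∀ (g : G) (n : N), Y (g * ↑n) = Y g * Y ↑n ∧ Y (↑n * g) = Y ↑n * Y g)
    (hY1' : ∀ (x : Matrix (Fin m) (Fin m) E) (g : G),
      (↑((Y' g)⁻¹) : Matrix (Fin (m * s)) (Fin (m * s)) K) * ι' x
          * (↑(Y' g) : Matrix (Fin (m * s)) (Fin (m * s)) K) = ι' (act g x))
    (hY2' : ∀ n : N, (↑(Y' ↑n) : Matrix (Fin (m * s)) (Fin (m * s)) K)
        = ι' (↑(X n) : Matrix (Fin m) (Fin m) E))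
    (hY3' : ∀ (g : G) (n : N), Y' (g * ↑n) = Y' g * Y' ↑n ∧ Y' (↑n * g) = Y' ↑n * Y' g)
    (α α' : G → G → Eˣ)
    (hα : ∀ g h : G,
      (↑(Y g) : Matrix (Fin (m * s)) (Fin (m * s)) K)
          * (↑(Y h) : Matrix (Fin (m * s)) (Fin (m * s)) K)
        = (↑(Y (g * h)) : Matrix (Fin (m * s)) (Fin (m * s)) K)
          * ι ((↑(α g h) : E) • (1 : Matrix (Fin m) (Fin m) E)))
    (hα' : ∀ g h : G,
      (↑(Y' g) : Matrix (Fin (m * s)) (Fin (m * s)) K)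
          * (↑(Y' h) : Matrix (Fin (m * s)) (Fin (m * s)) K)
        = (↑(Y' (g * h)) : Matrix (Fin (m * s)) (Fin (m * s)) K)
          * ι' ((↑(α' g h) : E) • (1 : Matrix (Fin m) (Fin m) E))) :
    ∃ γ : G → Eˣ,
      (∀ (g : G) (n : N), γ (g * ↑n) = γ g) ∧
      (∀ n : N, γ ↑n = 1) ∧
      (∀ g h : G,
        (↑(α' g h) : E)
          = (↑(α g h) : E) * σ h (↑(γ g) : E) * (↑(γ h) : E) * (↑(γ (g * h))⁻¹ : E)) :=
  stmt_10_general G N K E s hs m hm act σ hσ X ι ι' hι hι' Y Y' hY1 hY2 hY3 hY1' hY2' hY3' α α' hα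
    hα'
end

section
/- Let E be a finite field of characteristic p with prime field F_p, let G be a finite group with a normal subgroup N, and let X : N → GL_m(E) be a group homomorphism such that E is generated over F_p by the set of traces {tr X(n) : n ∈ N}. Say that a field automorphism σ of E 'works for' an element g ∈ G if there exists T ∈ GL_m(E) such that σ(X(g n g⁻¹)) = T X(n) T⁻¹ for all n ∈ N, where σ is applied to matrices entrywise. Then: (i) for each g ∈ G there is at most one automorphism σ ∈ Gal(E/F_p) that works for g; and (ii) if σ works for g and τ works for h, then the composite τ ∘ σ works for gh. -/
/-- A field automorphism `σ` of `E` *works for* an element `g ∈ G` (with respect to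
`X : N → GL_m(E)`, `N` normal in `G`) if there is `T ∈ GL_m(E)` with
`σ(X(g n g⁻¹)) = T X(n) T⁻¹` for all `n ∈ N`, `σ` being applied entrywise. -/
def WorksFor {G : Type} [Group G] {N : Subgroup G} (hN : N.Normal) {E : Type} [Field E]
    {m : ℕ} (X : N →* (Matrix (Fin m) (Fin m) E)ˣ) (σ : E ≃+* E) (g : G) : Prop :=
  ∃ T : (Matrix (Fin m) (Fin m) E)ˣ, ∀ n : N,
    ((↑(X ⟨g * ↑n * g⁻¹, hN.conj_mem ↑n n.2 g⟩) : Matrix (Fin m) (Fin m) E)).map ⇑σ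
      = (↑T : Matrix (Fin m) (Fin m) E) * (↑(X n) : Matrix (Fin m) (Fin m) E)
        * (↑(T⁻¹) : Matrix (Fin m) (Fin m) E)

theorem trace_map_eq {E : Type} [Field E] {m : ℕ} (A : Matrix (Fin m) (Fin m) E)
    (σ : E ≃+* E) : Matrix.trace (A.map ⇑σ) = σ (Matrix.trace A) := by
  simp [Matrix.trace, Matrix.map_apply, map_sum, Matrix.diag]

/-- Let `E` be a finite field of characteristic `p`, `G` a finite group with
normal subgroup `N`, and `X : N → GL_m(E)` a group homomorphism such that `E` is generated over
`F_p` by the traces `tr X(n)`.  Then (i) for each `g ∈ G` at most one automorphism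
`σ ∈ Gal(E/F_p)` works for `g`, and (ii) if `σ` works for `g` and `τ` works for `h`, then
`τ ∘ σ` works for `gh`. -/
theorem stmt_13 (p : ℕ) (hp : p.Prime) (E : Type) [Field E] [Fintype E] [CharP E p]
    (G : Type) [Group G] [Fintype G] (N : Subgroup G) (hN : N.Normal)
    (m : ℕ) (X : N →* (Matrix (Fin m) (Fin m) E)ˣ)
    (htr : Subfield.closure
        (Set.range fun n : N =>
          Matrix.trace (↑(X n) : Matrix (Fin m) (Fin m) E)) = ⊤) :
    (∀ (g : G) (σ τ : E ≃+* E), WorksFor hN X σ g → WorksFor hN X τ g → σ = τ) ∧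
    (∀ (g h : G) (σ τ : E ≃+* E), WorksFor hN X σ g → WorksFor hN X τ h →
      WorksFor hN X (σ.trans τ) (g * h)) := by
  constructor
  · rintro g σ τ ⟨T, hT⟩ ⟨S, hS⟩
    have key : ∀ n : N, σ (Matrix.trace (↑(X n) : Matrix (Fin m) (Fin m) E))
        = τ (Matrix.trace (↑(X n) : Matrix (Fin m) (Fin m) E)) := by
      intro n
      have hmem : g⁻¹ * ↑n * g ∈ N := by
        have := hN.conj_mem ↑n n.2 g⁻¹
        simpa using this
      set n' : N := ⟨g⁻¹ * ↑n * g, hmem⟩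
      have hn : (⟨g * ↑n' * g⁻¹, hN.conj_mem ↑n' n'.2 g⟩ : N) = n := by
        ext
        simp [n', mul_assoc]
      have h1 := hT n'
      have h2 := hS n'
      rw [hn] at h1 h2
      have t1 := congrArg Matrix.trace h1
      have t2 := congrArg Matrix.trace h2
      rw [trace_map_eq] at t1 t2
      rw [t1, t2, Matrix.trace_units_conj, Matrix.trace_units_conj]
    have : (σ : E →+* E) = (τ : E →+* E) := by
      apply RingHom.eq_of_eqOn_of_field_closure_eq_top htr
      rintro x ⟨n, rfl⟩
      exact key n
    exact RingEquiv.ext fun x => RingHom.congr_fun this x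
  · rintro g h σ τ ⟨T, hT⟩ ⟨S, hS⟩
    let φ : (Matrix (Fin m) (Fin m) E)ˣ →* (Matrix (Fin m) (Fin m) E)ˣ :=
      Units.map (τ.mapMatrix : Matrix (Fin m) (Fin m) E ≃+* _).toRingHom.toMonoidHom
    refine ⟨φ T * S, ?_⟩
    intro n
    have hmem : h * ↑n * h⁻¹ ∈ N := hN.conj_mem ↑n n.2 h
    set n' : N := ⟨h * ↑n * h⁻¹, hmem⟩
    have hn : (⟨g * h * ↑n * (g * h)⁻¹, hN.conj_mem ↑n n.2 (g * h)⟩ : N)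
        = ⟨g * ↑n' * g⁻¹, hN.conj_mem ↑n' n'.2 g⟩ := by
      ext
      simp [n', mul_assoc]
    have h1 := hT n'
    have h2 := hS n
    rw [hn]
    have step : ((↑(X ⟨g * ↑n' * g⁻¹, hN.conj_mem ↑n' n'.2 g⟩) :
        Matrix (Fin m) (Fin m) E)).map ⇑(σ.trans τ)
        = (((↑(X ⟨g * ↑n' * g⁻¹, hN.conj_mem ↑n' n'.2 g⟩) :
            Matrix (Fin m) (Fin m) E)).map ⇑σ).map ⇑τ := by
      rw [Matrix.map_map]
      rfl
    rw [step, h1]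
    have hmul : ∀ A B : Matrix (Fin m) (Fin m) E,
        (A * B).map ⇑τ = A.map ⇑τ * B.map ⇑τ := fun A B =>
      Matrix.map_mul (f := (τ : E →+* E))
    have hXn' : ((↑(X n') : Matrix (Fin m) (Fin m) E)).map ⇑τ
        = (↑S : Matrix (Fin m) (Fin m) E) * (↑(X n) : Matrix (Fin m) (Fin m) E) * (↑(S⁻¹) : Matrix (Fin m) (Fin m) E) := h2
    rw [hmul, hmul, hXn']
    have hφT : ((↑T : Matrix (Fin m) (Fin m) E)).map ⇑τ = ↑(φ T) := rfl
    have hφT' : ((↑(T⁻¹) : Matrix (Fin m) (Fin m) E)).map ⇑τ = ↑((φ T)⁻¹) := by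
      rw [← map_inv φ T]
      rfl
    rw [hφT, hφT']
    have hinv : ((φ T * S)⁻¹ : (Matrix (Fin m) (Fin m) E)ˣ) = S⁻¹ * (φ T)⁻¹ := by
      rw [mul_inv_rev]
    rw [hinv]
    push_cast
    noncomm_ring
end
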